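/- arXiv:1611.03784 — 10 statements merged into one kernel-verified Lean document; each statement's English description precedes it below -/
import Mathlib

section
/- Let (X,B,μ) be a probability space, f an ergodic measure-preserving automorphism, and φ ∈ L¹(X,μ) with ∫φ dμ = 0. If there exists M > 0 such that for μ-almost every x, the Birkhoff sums S_n φ(x) = Σ_{j=0}^{n-1} φ(f^j x) satisfy sup_{n≥1} S_n φ(x) < M, then for μ-almost every x it holds inf_{n≥1} S_n φ(x) ≥ -M. -/
open MeasureTheory Finset

/-- Auxiliary maximal-ergodic-type lemma: if the Birkhoff sums of a zero-mean integrable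
function are a.e. bounded above, then a.e. their supremum is nonnegative (for every `ε > 0`
some Birkhoff sum exceeds `-ε`). -/
lemma birkhoff_sup_nonneg_ae
    {X : Type*} [MeasurableSpace X] (μ : Measure X) [IsProbabilityMeasure μ]
    (f : X → X) (hf : MeasurePreserving f μ μ)
    (φ : X → ℝ) (hφ : Integrable φ μ) (hmean : ∫ x, φ x ∂μ = 0)
    (M : ℝ)
    (hupper : ∀ᵐ x ∂μ, ∀ n : ℕ, 1 ≤ n → (∑ j ∈ range n, φ (f^[j] x)) < M) :
    ∀ᵐ x ∂μ, ∀ ε : ℝ, 0 < ε → ∃ n : ℕ, 1 ≤ n ∧ -ε < ∑ j ∈ range n, φ (f^[j] x) := by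
  set S : ℕ → X → ℝ := fun n x => ∑ j ∈ range n, φ (f^[j] x) with hS
  set ψ : X → ℝ := fun x => ⨆ n : ℕ, S (n + 1) x with hψ
  have hSmeas : ∀ n, AEMeasurable (S n) μ := by
    intro n
    apply Finset.aemeasurable_fun_sum
    intro j _
    exact hφ.aemeasurable.comp_quasiMeasurePreserving (hf.iterate j).quasiMeasurePreserving
  have hψmeas : AEMeasurable ψ μ := AEMeasurable.iSup fun n => hSmeas (n + 1)
  have hrec : ∀ (x : X) (n : ℕ), S (n + 1) x = φ x + S n (f x) := by
    intro x n
    simp only [hS]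
    rw [Finset.sum_range_succ']
    simp only [Function.iterate_succ_apply, Function.iterate_zero_apply]
    ring
  -- pointwise facts on the good set
  have hbdd : ∀ x : X, (∀ n : ℕ, 1 ≤ n → S n x < M) →
      BddAbove (Set.range fun n : ℕ => S (n + 1) x) := by
    rintro x hx
    refine ⟨M, ?_⟩
    rintro _ ⟨n, rfl⟩
    exact (hx (n + 1) (Nat.le_add_left 1 n)).le
  have hφleψ : ∀ x : X, (∀ n : ℕ, 1 ≤ n → S n x < M) → φ x ≤ ψ x := by
    intro x hx
    have h1 : S 1 x ≤ ψ x := by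
      simpa using le_ciSup (hbdd x hx) 0
    have : S 1 x = φ x := by simp [hS]
    linarith
  have hψleM : ∀ x : X, (∀ n : ℕ, 1 ≤ n → S n x < M) → ψ x ≤ M := by
    intro x hx
    exact ciSup_le fun n => (hx (n + 1) (Nat.le_add_left 1 n)).le
  set ψp : X → ℝ := fun x => max 0 (ψ x) with hψp
  -- the recursion for ψ
  have hupperf : ∀ᵐ x ∂μ, ∀ n : ℕ, 1 ≤ n → S n (f x) < M :=
    hf.quasiMeasurePreserving.ae hupper
  have key : ∀ᵐ x ∂μ, ψ x = φ x + ψp (f x) := by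
    filter_upwards [hupper, hupperf] with x hx hfx
    apply le_antisymm
    · apply ciSup_le
      intro n
      rw [hrec]
      have hn : S n (f x) ≤ ψp (f x) := by
        cases n with
        | zero => simp [hS, hψp]
        | succ m =>
          have := le_ciSup (hbdd (f x) hfx) m
          exact le_trans this (le_max_right _ _)
      linarith
    · have h1 : ψp (f x) ≤ ψ x - φ x := by
        apply max_le
        · have := hφleψ x hx
          linarith
        · apply ciSup_le
          intro n
          have h2 : S (n + 2) x ≤ ψ x := le_ciSup (hbdd x hx) (n + 1)
          have h3 : S (n + 2) x = φ x + S (n + 1) (f x) := hrec x (n + 1)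
          linarith
      linarith
  -- integrability
  have habs : ∀ᵐ x ∂μ, ‖ψ x‖ ≤ |φ x| + |M| := by
    filter_upwards [hupper] with x hx
    rw [Real.norm_eq_abs, abs_le]
    constructor
    · have := hφleψ x hx
      have h2 : -|φ x| ≤ φ x := neg_abs_le _
      have h3 : (0 : ℝ) ≤ |M| := abs_nonneg _
      linarith
    · have := hψleM x hx
      have h2 : M ≤ |M| := le_abs_self _
      have h3 : (0 : ℝ) ≤ |φ x| := abs_nonneg _
      linarith
  have hψint : Integrable ψ μ := by
    refine Integrable.mono' (hφ.abs.add (integrable_const |M|)) hψmeas.aestronglyMeasurable ?_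
    simpa using habs
  have hψpmeas : AEMeasurable ψp μ := aemeasurable_const.sup hψmeas
  have hψpint : Integrable ψp μ := by
    refine Integrable.mono' hψint.abs hψpmeas.aestronglyMeasurable ?_
    filter_upwards with x
    rw [Real.norm_eq_abs, abs_le, hψp]
    constructor
    · have := neg_abs_le (ψ x)
      have h2 : max 0 (ψ x) ≥ 0 := le_max_left _ _
      have h3 : (0:ℝ) ≤ |ψ x| := abs_nonneg _
      linarith [le_max_left (0:ℝ) (ψ x)]
    · exact max_le (abs_nonneg _) (le_abs_self _)
  have hψpfint : Integrable (fun x => ψp (f x)) μ :=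
    (hf.integrable_comp hψpmeas.aestronglyMeasurable).mpr hψpint
  -- the integral identity
  have hint1 : ∫ x, ψ x ∂μ = ∫ x, (φ x + ψp (f x)) ∂μ := integral_congr_ae key
  have hint2 : ∫ x, (φ x + ψp (f x)) ∂μ = ∫ x, φ x ∂μ + ∫ x, ψp (f x) ∂μ :=
    integral_add hφ hψpfint
  have hint3 : ∫ x, ψp (f x) ∂μ = ∫ x, ψp x ∂μ := by
    have hm : AEStronglyMeasurable ψp (Measure.map f μ) := by
      rw [hf.map_eq]; exact hψpmeas.aestronglyMeasurable
    conv_rhs => rw [← hf.map_eq]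
    rw [integral_map hf.measurable.aemeasurable hm]
  have hint : ∫ x, ψ x ∂μ = ∫ x, ψp x ∂μ := by
    rw [hint1, hint2, hmean, hint3]; ring
  -- conclude ψ ≥ 0 a.e.
  have hdiff : ∫ x, (ψp x - ψ x) ∂μ = 0 := by
    rw [integral_sub hψpint hψint, hint]; ring
  have hnonneg : 0 ≤ᵐ[μ] fun x => ψp x - ψ x := by
    filter_upwards with x
    have : ψ x ≤ ψp x := le_max_right _ _
    simpa using this
  have hzero : (fun x => ψp x - ψ x) =ᵐ[μ] 0 :=
    (integral_eq_zero_iff_of_nonneg_ae hnonneg (hψpint.sub hψint)).mp hdiff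
  have hψ0 : ∀ᵐ x ∂μ, 0 ≤ ψ x := by
    filter_upwards [hzero] with x hx
    have : ψp x = ψ x := by
      have := sub_eq_zero.mp (by simpa using hx)
      linarith [this]
    rw [← this]
    exact le_max_left _ _
  filter_upwards [hψ0] with x hx
  intro ε hε
  have hlt : -ε < ψ x := by linarith
  obtain ⟨n, hn⟩ := exists_lt_of_lt_ciSup hlt
  exact ⟨n + 1, Nat.le_add_left 1 n, hn⟩

/-- **Atkinson-type lemma.** Let `(X, μ)` be a probability space, `f` an ergodic
measure-preserving automorphism and `φ ∈ L¹(μ)` with `∫ φ dμ = 0`.  If there is `M > 0`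
such that for μ-a.e. `x` the Birkhoff sums `S_n φ(x) = ∑_{j<n} φ(f^j x)` satisfy
`S_n φ(x) < M` for all `n ≥ 1`, then for μ-a.e. `x` we have `S_n φ(x) ≥ -M` for all `n ≥ 1`. -/
theorem birkhoff_sums_bounded_above_imp_bounded_below
    {X : Type*} [MeasurableSpace X] (μ : Measure X) [IsProbabilityMeasure μ]
    (f : X ≃ᵐ X) (hf : Ergodic (⇑f) μ)
    (φ : X → ℝ) (hφ : Integrable φ μ) (hmean : ∫ x, φ x ∂μ = 0)
    (M : ℝ) (hM : 0 < M)
    (hupper : ∀ᵐ x ∂μ, ∀ n : ℕ, 1 ≤ n → (∑ j ∈ range n, φ ((⇑f)^[j] x)) < M) :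
    ∀ᵐ x ∂μ, ∀ n : ℕ, 1 ≤ n → -M ≤ ∑ j ∈ range n, φ ((⇑f)^[j] x) := by
  have hmp : MeasurePreserving (⇑f) μ μ := hf.toMeasurePreserving
  set g : X → X := ⇑f.symm with hg
  have hgmp : MeasurePreserving g μ μ := hmp.symm f
  set S : ℕ → X → ℝ := fun n x => ∑ j ∈ range n, φ ((⇑f)^[j] x) with hS
  have hSbirk : ∀ n x, S n x = birkhoffSum (⇑f) φ n x := fun n x => rfl
  have hsum : ∀ (a b : ℕ) (z : X), S (a + b) z = S a z + S b ((⇑f)^[a] z) := by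
    intro a b z
    simp only [hSbirk]
    exact birkhoffSum_add (⇑f) φ a b z
  have hfg : Function.LeftInverse (⇑f) g := fun x => f.apply_symm_apply x
  have hgf : Function.LeftInverse g (⇑f) := fun x => f.symm_apply_apply x
  have hfgn : ∀ (n : ℕ) (x : X), (⇑f)^[n] (g^[n] x) = x := fun n x => hfg.iterate n x
  have hgfn : ∀ (n : ℕ) (x : X), g^[n] ((⇑f)^[n] x) = x := fun n x => hgf.iterate n x
  -- the supremum lemma
  have hA := birkhoff_sup_nonneg_ae μ (⇑f) hmp φ hφ hmean M hupper
  -- transport to points g^[n] x, for all n simultaneously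
  have h2 : ∀ᵐ y ∂μ, ∀ n : ℕ, ∀ ε : ℝ, 0 < ε → ∃ k : ℕ, 1 ≤ k ∧ -ε < S k (g^[n] y) :=
    ae_all_iff.mpr fun n => (hgmp.iterate n).quasiMeasurePreserving.ae hA
  -- the key claim: backward sums are bounded below by -M
  have key : ∀ᵐ y ∂μ, ∀ n : ℕ, -M ≤ S n (g^[n] y) := by
    filter_upwards [hupper, h2] with y hy h2y
    intro n
    induction n using Nat.strong_induction_on with
    | _ n ih =>
      by_contra hc
      push_neg at hc
      obtain ⟨k, hk1, hk⟩ := h2y n (-M - S n (g^[n] y)) (by linarith)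
      rcases le_or_gt n k with h | h
      · -- k ≥ n : S k (g^[n] y) = S n (g^[n] y) + S (k - n) y
        have hsplit : S k (g^[n] y) = S n (g^[n] y) + S (k - n) y := by
          have := hsum n (k - n) (g^[n] y)
          rw [Nat.add_sub_cancel' h] at this
          rw [this, hfgn]
        rw [hsplit] at hk
        have hMlt : M < S (k - n) y := by linarith
        rcases Nat.eq_or_lt_of_le h with heq | hlt
        · rw [← heq, Nat.sub_self] at hMlt
          simp [hS] at hMlt
          linarith
        · have := hy (k - n) (by omega)
          linarith
      · -- k < n : S n (g^[n] y) = S k (g^[n] y) + S (n - k) (g^[n - k] y)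
        have hsplit : S n (g^[n] y) = S k (g^[n] y) + S (n - k) (g^[n - k] y) := by
          have h1 : g^[n] y = g^[k] (g^[n - k] y) := by
            rw [← Function.iterate_add_apply]
            congr 1
            omega
          have h2' := hsum k (n - k) (g^[n] y)
          rw [Nat.add_sub_cancel' h.le] at h2'
          rw [h2']
          congr 1
          rw [h1, hfgn]
        have hIH := ih (n - k) (by omega)
        rw [hsplit] at hk hc
        linarith
  -- transport back: for each n, a.e. x we have S n x = S n (g^[n] (f^[n] x)) ≥ -M
  rw [ae_all_iff]
  intro n
  filter_upwards [(hmp.iterate n).quasiMeasurePreserving.ae key] with x hx _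
  have := hx n
  rwa [hgfn] at this
end

section
/- Let (X,B,μ) be a probability space, f an ergodic measure-preserving automorphism, and φ ∈ L¹(X,μ) with ∫φ dμ = 0. Suppose that for μ-a.e. x, sup_{n≥0} S_f^n φ(x) = +∞ and inf_{n≥0} S_f^n φ(x) > -∞, where S_f^n φ denotes the Birkhoff sum over forward iterates. Then for μ-a.e. x, sup_{n≤0} S_f^n φ(x) = +∞ and inf_{n≤0} S_f^n φ(x) > -∞, where for n < 0, S_f^n φ(x) := -Σ_{j=1}^{-n} φ(f^{-j}(x)). -/
/-!
Forward sums bounded below make `ψ := sup_{n ≥ 0} S_n(-φ) ≥ 0` finite a.e., with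
`-φ ≤ ψ - ψ ∘ f`. A function dominated by `u - u ∘ f` with `u ≥ 0` measurable has nonpositive
integral (truncate `u` at height `m` and let `m → ∞`), so `∫ φ = 0` forces equality:
`φ = ψ ∘ f - ψ` a.e. Hence `S_{-n} φ = ψ ∘ f^{-n} - ψ ≥ -ψ` along a.e. backward orbit. Forward
unboundedness of `S_n φ = ψ ∘ f^n - ψ` shows that every set `{ψ > C}` has positive measure, and by
ergodicity of `f⁻¹` almost every backward orbit enters each of them.
-/

open MeasureTheory Finset

/-- The two-sided Birkhoff sum `S_f^n φ` of `φ` under the invertible map `f`: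
`S_f^n φ = ∑_{j=0}^{n-1} φ ∘ f^j` for `n ≥ 0`, and
`S_f^n φ = -∑_{j=1}^{-n} φ ∘ f^{-j}` for `n < 0`. -/
noncomputable def birkhoffZ {X : Type*} (f : X ≃ X) (φ : X → ℝ) (n : ℤ) (x : X) : ℝ :=
  if 0 ≤ n then ∑ j ∈ range n.toNat, φ ((⇑f)^[j] x)
  else -∑ j ∈ range (-n).toNat, φ ((⇑f.symm)^[j + 1] x)

open Filter Set

section BirkhoffSup

variable {X : Type*} {T : X → X} {g : X → ℝ} {x : X}

/-- `sup_{n ≥ 0} S_n g x`, and `0` where the sums are unbounded above. -/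
noncomputable def birkhoffSup (T : X → X) (g : X → ℝ) (x : X) : ℝ :=
  ⨆ n : ℕ, birkhoffSum T g n x

theorem birkhoffSup_nonneg (T : X → X) (g : X → ℝ) (x : X) : 0 ≤ birkhoffSup T g x := by
  by_cases hx : BddAbove (range fun n => birkhoffSum T g n x)
  · exact (birkhoffSum_zero T g x).symm.trans_le (le_ciSup hx 0)
  · rw [birkhoffSup, Real.iSup_of_not_bddAbove hx]

theorem add_birkhoffSup_apply_le (hx : BddAbove (range fun n => birkhoffSum T g n x)) :
    g x + birkhoffSup T g (T x) ≤ birkhoffSup T g x := by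
  have : birkhoffSup T g (T x) ≤ birkhoffSup T g x - g x :=
    ciSup_le fun n => le_sub_iff_add_le'.2 <|
      (birkhoffSum_succ' T g n x).symm.trans_le (le_ciSup hx (n + 1))
  linarith

theorem Measurable.birkhoffSup [MeasurableSpace X] (hT : Measurable T) (hg : Measurable g) :
    Measurable (birkhoffSup T g) :=
  .iSup fun _ => Finset.measurable_sum _ fun i _ => hg.comp (hT.iterate i)

end BirkhoffSup

theorem birkhoffSum_comp_sub {X G : Type*} [AddCommGroup G] (T : X → X) (ψ : X → G) (n : ℕ)
    (x : X) : birkhoffSum T (fun y => ψ (T y) - ψ y) n x = ψ (T^[n] x) - ψ x := by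
  simp only [birkhoffSum, ← Function.iterate_succ_apply' T]
  exact Finset.sum_range_sub (fun k => ψ (T^[k] x)) n

namespace MeasureTheory

variable {X : Type*} [MeasurableSpace X] {μ : Measure X} {T : X → X}

namespace MeasurePreserving

variable [IsFiniteMeasure μ]

theorem integral_nonpos_of_le_sub_comp (hT : MeasurePreserving T μ μ) {h u : X → ℝ}
    (hh : Integrable h μ) (hu : Measurable u) (hu0 : ∀ x, 0 ≤ u x)
    (hle : ∀ᵐ x ∂μ, h x ≤ u x - u (T x)) :
    ∫ x, h x ∂μ ≤ 0 := by
  set s : ℕ → Set X := fun m => {x | (m : ℝ) < u x}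
  have hs : ∀ m, MeasurableSet (s m) := fun m => measurableSet_lt measurable_const hu
  have hpos : Integrable (fun x => max (h x) 0) μ := hh.pos_part
  have hbound : ∀ m : ℕ, ∫ x, h x ∂μ ≤ ∫ x in s m, max (h x) 0 ∂μ := by
    intro m
    set v : X → ℝ := fun x => min (u x) m
    have hv : Integrable v μ :=
      (integrable_const (m : ℝ)).mono' (hu.min measurable_const).aestronglyMeasurable
        (ae_of_all _ fun x => by
          rw [Real.norm_of_nonneg (le_min (hu0 x) m.cast_nonneg)]
          exact min_le_right _ _)
    have hvT : Integrable (fun x => v (T x)) μ := hT.integrable_comp_of_integrable hv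
    have hcob : ∫ x, v x - v (T x) ∂μ = 0 := by
      rw [integral_sub hv hvT, ← integral_map hT.aemeasurable (by rw [hT.map_eq]; exact hv.1),
        hT.map_eq, sub_self]
    have hpt : ∀ᵐ x ∂μ, h x ≤ v x - v (T x) + (s m).indicator (fun x => max (h x) 0) x := by
      filter_upwards [hle] with x hx
      by_cases hxm : x ∈ s m
      · have : v x = m := min_eq_right (le_of_lt hxm)
        rw [indicator_of_mem hxm, this]
        linarith [min_le_right (u (T x)) m, le_max_left (h x) 0]
      · have : v x = u x := min_eq_left (not_lt.1 hxm)
        rw [indicator_of_notMem hxm, this]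
        linarith [min_le_left (u (T x)) m]
    calc ∫ x, h x ∂μ
        ≤ ∫ x, (v x - v (T x)) + (s m).indicator (fun x => max (h x) 0) x ∂μ :=
          integral_mono_ae hh ((hv.sub hvT).add (hpos.indicator (hs m))) hpt
      _ = ∫ x in s m, max (h x) 0 ∂μ := by
          rw [integral_add (f := fun x => v x - v (T x)) (hv.sub hvT) (hpos.indicator (hs m)),
            hcob, zero_add, integral_indicator (hs m)]
  have hlim : Tendsto (fun m : ℕ => ∫ x in s m, max (h x) 0 ∂μ) atTop (nhds 0) := by
    have hempty : ⋂ m, s m = ∅ := by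
      refine eq_empty_of_forall_notMem fun x hx => ?_
      obtain ⟨m, hm⟩ := exists_nat_ge (u x)
      exact (mem_iInter.1 hx m).not_ge hm
    simpa [hempty] using tendsto_setIntegral_of_antitone hs
      (fun m n hmn x (hx : (n : ℝ) < u x) => (Nat.cast_le.2 hmn).trans_lt hx)
      ⟨0, hpos.integrableOn⟩
  exact ge_of_tendsto' hlim hbound

theorem ae_eq_sub_comp_of_le_sub_comp (hT : MeasurePreserving T μ μ) {h u : X → ℝ}
    (hh : Integrable h μ) (hu : Measurable u) (hu0 : ∀ x, 0 ≤ u x)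
    (hle : ∀ᵐ x ∂μ, h x ≤ u x - u (T x))
    (hmean : 0 ≤ ∫ x, h x ∂μ) : h =ᵐ[μ] fun x => u x - u (T x) := by
  -- the defect `u - u ∘ T - h` need not be integrable, its truncation at `1` is
  set g : X → ℝ := fun x => min (u x - u (T x) - h x) 1
  have hg0 : ∀ᵐ x ∂μ, 0 ≤ g x := hle.mono fun x hx => le_min (by linarith) zero_le_one
  have hg : Integrable g μ :=
    (integrable_const (1 : ℝ)).mono'
      (((hu.sub (hu.comp hT.measurable)).aestronglyMeasurable.sub hh.1).inf
        aestronglyMeasurable_const)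
      (hg0.mono fun x hx => by rw [Real.norm_of_nonneg hx]; exact min_le_right _ _)
  have hsum : ∫ x, h x + g x ∂μ ≤ 0 :=
    hT.integral_nonpos_of_le_sub_comp (hh.add hg) hu hu0
      (ae_of_all _ fun x => by linarith [min_le_left (u x - u (T x) - h x) 1])
  have hg_zero : g =ᵐ[μ] 0 := by
    rw [integral_add hh hg] at hsum
    exact (integral_eq_zero_iff_of_nonneg_ae hg0 hg).1
      (le_antisymm (by linarith) (integral_nonneg_of_ae hg0))
  filter_upwards [hle, hg_zero] with x hx hgx
  have : min (u x - u (T x) - h x) 1 = 0 := hgx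
  rcases min_eq_iff.1 this with ⟨hd, -⟩ | ⟨h1, -⟩
  · linarith
  · exact absurd h1 one_ne_zero

theorem exists_nonneg_ae_eq_comp_sub_of_bddBelow_birkhoffSum
    (hT : MeasurePreserving T μ μ) {φ : X → ℝ} (hφ : Integrable φ μ)
    (hmean : ∫ x, φ x ∂μ ≤ 0) (hbdd : ∀ᵐ x ∂μ, BddBelow (range fun n => birkhoffSum T φ n x)) :
    ∃ ψ : X → ℝ, Measurable ψ ∧ (∀ x, 0 ≤ ψ x) ∧ φ =ᵐ[μ] fun x => ψ (T x) - ψ x := by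
  set φ₀ := hφ.1.mk φ
  have hφ₀ : φ =ᵐ[μ] φ₀ := hφ.1.ae_eq_mk
  set ψ := birkhoffSup T (-φ₀)
  have hψ : Measurable ψ := hT.measurable.birkhoffSup hφ.1.stronglyMeasurable_mk.measurable.neg
  have hbdd₀ : ∀ᵐ x ∂μ, BddAbove (range fun n => birkhoffSum T (-φ₀) n x) := by
    filter_upwards [hbdd, ae_all_iff.2 fun n =>
      hT.quasiMeasurePreserving.birkhoffSum_ae_eq_of_ae_eq hφ₀ n] with x ⟨K, hK⟩ hx
    refine ⟨-K, ?_⟩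
    rintro _ ⟨n, rfl⟩
    have := hK ⟨n, rfl⟩
    simp only [birkhoffSum_neg, ← hx n]
    linarith
  have hcob := hT.ae_eq_sub_comp_of_le_sub_comp (hφ.congr hφ₀).neg hψ (birkhoffSup_nonneg T _)
    (hbdd₀.mono fun x hx => by linarith [add_birkhoffSup_apply_le hx])
    (by rw [integral_neg', ← integral_congr_ae hφ₀]; linarith)
  refine ⟨ψ, hψ, birkhoffSup_nonneg T _, ?_⟩
  filter_upwards [hφ₀, hcob] with x h₀ hx
  simp only [Pi.neg_apply] at hx
  linarith

end MeasurePreserving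

namespace Measure.QuasiMeasurePreserving

theorem ae_birkhoffSum_eq_of_ae_eq_comp_sub
    (hT : Measure.QuasiMeasurePreserving T μ μ) {φ ψ : X → ℝ}
    (hφ : φ =ᵐ[μ] fun x => ψ (T x) - ψ x) :
    ∀ᵐ x ∂μ, ∀ n : ℕ, birkhoffSum T φ n x = ψ (T^[n] x) - ψ x := by
  filter_upwards [ae_all_iff.2 fun n => hT.birkhoffSum_ae_eq_of_ae_eq hφ n] with x hx n
  rw [hx n, birkhoffSum_comp_sub]

theorem measure_lt_ne_zero_of_ae_forall_exists_lt_iterate [NeZero μ]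
    (hT : Measure.QuasiMeasurePreserving T μ μ) {ψ : X → ℝ}
    (h : ∀ᵐ x ∂μ, ∀ C, ∃ n, C < ψ (T^[n] x)) (C : ℝ) : μ {x | C < ψ x} ≠ 0 := by
  intro h0
  have hle : ∀ᵐ x ∂μ, ∀ n, ψ (T^[n] x) ≤ C :=
    ae_all_iff.2 fun n => (hT.iterate n).ae (measure_eq_zero_iff_ae_notMem.1 h0 |>.mono
      fun x hx => not_lt.1 hx)
  obtain ⟨x, hx, hxC⟩ := (h.and hle).exists
  obtain ⟨n, hn⟩ := hx C
  exact (hxC n).not_gt hn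

end Measure.QuasiMeasurePreserving

end MeasureTheory

namespace Ergodic

variable {X : Type*} [MeasurableSpace X] {μ : Measure X} [IsFiniteMeasure μ] {T : X → X}

theorem ae_exists_iterate_mem (hT : Ergodic T μ) {s : Set X}
    (hs : MeasurableSet s) (h0 : μ s ≠ 0) : ∀ᵐ x ∂μ, ∃ n, T^[n] x ∈ s := by
  set B := ⋃ n, T^[n] ⁻¹' s
  have hB : MeasurableSet B := .iUnion fun n => hs.preimage (hT.measurable.iterate n)
  have hinv : T ⁻¹' B ⊆ B := fun x hx => by
    obtain ⟨n, hn⟩ := mem_iUnion.1 hx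
    exact mem_iUnion.2 ⟨n + 1, by rwa [Set.mem_preimage, Function.iterate_succ_apply]⟩
  rcases hT.ae_empty_or_univ_of_preimage_ae_le' hB.nullMeasurableSet hinv.eventuallyLE
    (measure_ne_top μ B) with hempty | huniv
  · exact absurd (measure_mono_null (subset_iUnion_of_subset 0 subset_rfl)
      (ae_eq_empty.1 hempty)) h0
  · have hmem : ∀ᵐ x ∂μ, x ∈ B := mem_ae_iff.2 (ae_eq_univ.1 huniv)
    exact hmem.mono fun x hx => mem_iUnion.1 hx

theorem ae_forall_exists_lt_iterate (hT : Ergodic T μ)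
    {ψ : X → ℝ} (hψ : Measurable ψ) (h : ∀ C, μ {x | C < ψ x} ≠ 0) :
    ∀ᵐ x ∂μ, ∀ C : ℝ, ∃ n, C < ψ (T^[n] x) := by
  filter_upwards [ae_all_iff.2 fun m : ℕ =>
    hT.ae_exists_iterate_mem (measurableSet_lt measurable_const hψ) (h m)] with x hx C
  obtain ⟨m, hm⟩ := exists_nat_gt C
  obtain ⟨n, hn⟩ := hx m
  exact ⟨n, hm.trans hn⟩

end Ergodic

section BirkhoffZ

variable {X : Type*} (f : X ≃ X) (φ : X → ℝ) (n : ℕ) {x : X}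

theorem birkhoffZ_natCast : birkhoffZ f φ n x = birkhoffSum f φ n x := by
  simp [birkhoffZ, birkhoffSum]

theorem birkhoffZ_neg_natCast :
    birkhoffZ f φ (-n) x = -birkhoffSum f.symm (φ ∘ f.symm) n x := by
  cases n with
  | zero => simp [birkhoffZ]
  | succ n =>
    rw [birkhoffZ, if_neg (by omega)]
    simp [birkhoffSum, Function.iterate_succ_apply']

end BirkhoffZ

theorem MeasureTheory.MeasurePreserving.ae_birkhoffZ_neg_natCast_eq_of_ae_eq_comp_sub
    {X : Type*} [MeasurableSpace X] {μ : Measure X} {f : X ≃ᵐ X} (hf : MeasurePreserving f μ μ)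
    {φ ψ : X → ℝ} (h : φ =ᵐ[μ] fun x => ψ (f x) - ψ x) :
    ∀ᵐ x ∂μ, ∀ n : ℕ, birkhoffZ f.toEquiv φ (-n) x = ψ (f.symm^[n] x) - ψ x := by
  have hsymm : φ ∘ f.symm =ᵐ[μ] fun x => (-ψ) (f.symm x) - (-ψ) x := by
    filter_upwards [(hf.symm f).quasiMeasurePreserving.ae h] with x hx
    simp only [Function.comp_apply, hx, MeasurableEquiv.apply_symm_apply, Pi.neg_apply]
    ring
  filter_upwards [(hf.symm f).quasiMeasurePreserving.ae_birkhoffSum_eq_of_ae_eq_comp_sub hsymm]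
    with x hx n
  simp only [birkhoffZ_neg_natCast, MeasurableEquiv.coe_toEquiv_symm, hx, Pi.neg_apply]
  ring

/-- **Ergodic deviation theorem.** If `f` is an ergodic automorphism of a probability space
and `φ ∈ L¹` has zero mean, and if for a.e. `x` the forward Birkhoff sums are unbounded
from above but bounded from below, then for a.e. `x` the backward Birkhoff sums are also
unbounded from above and bounded from below. -/
theorem ergodic_deviations_backward
    {X : Type*} [MeasurableSpace X] (μ : Measure X) [IsProbabilityMeasure μ]
    (f : X ≃ᵐ X) (hf : Ergodic (⇑f) μ)
    (φ : X → ℝ) (hφ : Integrable φ μ) (hmean : ∫ x, φ x ∂μ = 0)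
    (hforward : ∀ᵐ x ∂μ,
      (∀ M : ℝ, ∃ n : ℤ, 0 ≤ n ∧ M < birkhoffZ f.toEquiv φ n x) ∧
      (∃ K : ℝ, ∀ n : ℤ, 0 ≤ n → -K < birkhoffZ f.toEquiv φ n x)) :
    ∀ᵐ x ∂μ,
      (∀ M : ℝ, ∃ n : ℤ, n ≤ 0 ∧ M < birkhoffZ f.toEquiv φ n x) ∧
      (∃ K : ℝ, ∀ n : ℤ, n ≤ 0 → -K < birkhoffZ f.toEquiv φ n x) := by
  have hT := hf.toMeasurePreserving
  have hsums : ∀ᵐ x ∂μ, (∀ M, ∃ n, M < birkhoffSum f φ n x) ∧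
      BddBelow (range fun n => birkhoffSum f φ n x) := by
    filter_upwards [hforward] with x ⟨hunb, K, hK⟩
    refine ⟨fun M => ?_, -K, ?_⟩
    · obtain ⟨n, hn0, hn⟩ := hunb M
      lift n to ℕ using hn0
      exact ⟨n, by simpa [birkhoffZ_natCast] using hn⟩
    · rintro _ ⟨n, rfl⟩
      simpa [birkhoffZ_natCast] using (hK n n.cast_nonneg).le
  obtain ⟨ψ, hψm, hψ0, hφψ⟩ := hT.exists_nonneg_ae_eq_comp_sub_of_bddBelow_birkhoffSum hφ
    hmean.le (hsums.mono fun x hx => hx.2)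
  have hvisit : ∀ᵐ x ∂μ, ∀ C : ℝ, ∃ n, C < ψ (f.symm^[n] x) := by
    refine hf.symm.ae_forall_exists_lt_iterate hψm fun C => ?_
    refine hT.quasiMeasurePreserving.measure_lt_ne_zero_of_ae_forall_exists_lt_iterate ?_ C
    filter_upwards [hsums, hT.quasiMeasurePreserving.ae_birkhoffSum_eq_of_ae_eq_comp_sub hφψ]
      with x hx hcob C
    obtain ⟨n, hn⟩ := hx.1 C
    exact ⟨n, by linarith [hcob n, hψ0 x]⟩
  filter_upwards [hT.ae_birkhoffZ_neg_natCast_eq_of_ae_eq_comp_sub hφψ, hvisit] with x hx hvx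
  refine ⟨fun M => ?_, ψ x + 1, fun n hn => ?_⟩
  · obtain ⟨m, hm⟩ := hvx (M + ψ x)
    exact ⟨-m, by omega, by linarith [hx m]⟩
  · obtain ⟨m, rfl⟩ := Int.exists_eq_neg_ofNat hn
    linarith [hx m, hψ0 (f.symm^[m] x)]
end

section
/- Let X be a compact metric space, f : X → X a minimal homeomorphism, and φ : X → ℝ continuous. If there exists a point x₀ ∈ X such that sup_{n∈ℕ} |Σ_{j=0}^{n-1} φ(f^j(x₀))| < ∞, then there exists a continuous u : X → ℝ with u∘f - u = φ, and consequently sup_{n∈ℕ} |Σ_{j=0}^{n-1} φ(f^j(x))| ≤ 2‖u‖_{C⁰} for every x ∈ X. -/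
open Finset

/-- **Gottschalk–Hedlund theorem.** Let `X` be a compact metric space, `f` a minimal
homeomorphism of `X` and `φ : X → ℝ` continuous.  If at some point `x₀` the Birkhoff sums
`∑_{j<n} φ(f^j x₀)` are bounded, then `φ = u ∘ f - u` for some continuous `u`, and
consequently all Birkhoff sums are bounded by twice the sup-norm of `u`. -/
theorem gottschalk_hedlund
    {X : Type*} [MetricSpace X] [CompactSpace X]
    (f : X ≃ₜ X)
    (hmin : ∀ A : Set X, IsClosed A → (⇑f) '' A = A → A = ∅ ∨ A = Set.univ)
    (φ : X → ℝ) (hφ : Continuous φ)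
    (x₀ : X) (hbound : ∃ K : ℝ, ∀ n : ℕ, |∑ j ∈ range n, φ ((⇑f)^[j] x₀)| ≤ K) :
    ∃ u : X → ℝ, Continuous u ∧ (∀ x, u (f x) - u x = φ x) ∧
      ∀ x : X, ∀ n : ℕ, |∑ j ∈ range n, φ ((⇑f)^[j] x)| ≤ 2 * ⨆ y : X, |u y| := by
  classical
  obtain ⟨K₀, hK₀⟩ := hbound
  -- the skew product on `X × ℝ`
  set F : X × ℝ → X × ℝ := fun p => (f p.1, p.2 + φ p.1) with hF
  have hFc : Continuous F :=
    (f.continuous.comp continuous_fst).prodMk (continuous_snd.add (hφ.comp continuous_fst))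
  -- the orbit of `(x₀, 0)`
  set orb : ℕ → X × ℝ := fun n => ((⇑f)^[n] x₀, ∑ j ∈ range n, φ ((⇑f)^[j] x₀)) with horb
  have horbF : ∀ n, F (orb n) = orb (n + 1) := by
    intro n
    simp only [horb, hF, Function.iterate_succ_apply', Finset.sum_range_succ]
  set Kc : Set (X × ℝ) := closure (Set.range orb) with hKc
  have hKcne : Kc.Nonempty := ⟨orb 0, subset_closure ⟨0, rfl⟩⟩
  have hKccl : IsClosed Kc := isClosed_closure
  have hKcsub : Kc ⊆ Set.univ ×ˢ Set.Icc (-K₀) K₀ := by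
    apply closure_minimal
    · rintro p ⟨n, rfl⟩
      exact ⟨trivial, (abs_le.mp (hK₀ n)).1, (abs_le.mp (hK₀ n)).2⟩
    · exact isClosed_univ.prod isClosed_Icc
  have hKccpt : IsCompact Kc :=
    (isCompact_univ.prod isCompact_Icc).of_isClosed_subset hKccl hKcsub
  have hKcinv : F '' Kc ⊆ Kc := by
    refine (image_closure_subset_closure_image hFc).trans (closure_mono ?_)
    rintro p ⟨q, ⟨n, rfl⟩, rfl⟩
    exact ⟨n + 1, (horbF n).symm⟩
  -- Zorn: a minimal nonempty closed invariant subset of `Kc`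
  set S : Set (Set (X × ℝ)) :=
    {A | A.Nonempty ∧ IsClosed A ∧ A ⊆ Kc ∧ F '' A ⊆ A} with hS
  have hchainC : ∀ c ⊆ S, IsChain (· ⊆ ·) c → c.Nonempty →
      ∃ lb ∈ S, ∀ s ∈ c, lb ⊆ s := by
    intro c hcS hchain hcne
    refine ⟨⋂₀ c, ⟨?_, ?_, ?_, ?_⟩, fun s hs => Set.sInter_subset_of_mem hs⟩
    · haveI : Nonempty c := hcne.to_subtype
      have hdir : DirectedOn (· ⊇ ·) c := by
        intro a ha b hb
        rcases hchain.total ha hb with hab | hba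
        · exact ⟨a, ha, subset_rfl, hab⟩
        · exact ⟨b, hb, hba, subset_rfl⟩
      exact IsCompact.nonempty_sInter_of_directed_nonempty_isCompact_isClosed
        hdir (fun U hU => (hcS hU).1)
        (fun U hU => hKccpt.of_isClosed_subset (hcS hU).2.1 (hcS hU).2.2.1)
        (fun U hU => (hcS hU).2.1)
    · exact isClosed_sInter fun U hU => (hcS hU).2.1
    · obtain ⟨U, hU⟩ := hcne
      exact (Set.sInter_subset_of_mem hU).trans (hcS hU).2.2.1
    · rintro p ⟨q, hq, rfl⟩ U hU
      exact (hcS hU).2.2.2 ⟨q, hq U hU, rfl⟩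
  obtain ⟨M, -, hMS, hMmin⟩ :
      ∃ M, M ⊆ Kc ∧ M ∈ S ∧ ∀ B ∈ S, B ⊆ M → M ⊆ B := by
    obtain ⟨M, hMKc, hMmin⟩ := zorn_superset_nonempty S hchainC Kc
      ⟨hKcne, hKccl, subset_rfl, hKcinv⟩
    exact ⟨M, hMKc, hMmin.1, fun B hB hBM => hMmin.2 hB hBM⟩
  obtain ⟨hMne, hMcl, hMKc, hMinv⟩ := hMS
  have hMcpt : IsCompact M := hKccpt.of_isClosed_subset hMcl hMKc
  -- invariance is an equality on the minimal set
  have hMeq : F '' M = M := by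
    have h1 : F '' M ∈ S :=
      ⟨hMne.image F, (hMcpt.image hFc).isClosed, (Set.image_mono hMKc).trans hKcinv,
        Set.image_mono hMinv⟩
    exact Set.Subset.antisymm hMinv (hMmin _ h1 hMinv)
  -- the projection of M to X is all of X
  have hproj : Prod.fst '' M = Set.univ := by
    have hcl : IsClosed (Prod.fst '' M) := (hMcpt.image continuous_fst).isClosed
    have hinv : (⇑f) '' (Prod.fst '' M) = Prod.fst '' M := by
      calc (⇑f) '' (Prod.fst '' M) = Prod.fst '' (F '' M) := by
            rw [Set.image_image, Set.image_image]
        _ = Prod.fst '' M := by rw [hMeq]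
    rcases hmin _ hcl hinv with h | h
    · exact absurd h (hMne.image Prod.fst).ne_empty
    · exact h
  -- second coordinates on M are bounded
  have hMbd : ∀ p ∈ M, |p.2| ≤ K₀ := by
    intro p hp
    have h := hKcsub (hMKc hp)
    exact abs_le.mpr ⟨h.2.1, h.2.2⟩
  -- fibers of M are singletons
  have huniq : ∀ x : X, ∀ t s : ℝ, (x, t) ∈ M → (x, s) ∈ M → t = s := by
    intro x t s ht hs
    by_contra hne
    set c : ℝ := s - t with hc
    have hc0 : c ≠ 0 := sub_ne_zero.mpr (Ne.symm hne)
    set T : X × ℝ → X × ℝ := fun p => (p.1, p.2 + c) with hT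
    have hTc : Continuous T := continuous_fst.prodMk (continuous_snd.add continuous_const)
    have hFT : ∀ p, F (T p) = T (F p) := by
      intro p
      simp only [hF, hT]
      exact Prod.ext rfl (by ring)
    -- `M ∩ T '' M` is a nonempty closed invariant subset of `M`
    have hmem : M ∩ T '' M ∈ S := by
      refine ⟨⟨(x, s), hs, (x, t), ht, ?_⟩,
        hMcl.inter (hMcpt.image hTc).isClosed, Set.inter_subset_left.trans hMKc, ?_⟩
      · have hts : t + c = s := by rw [hc]; ring
        simp only [hT, hts]
      · rintro p ⟨q, ⟨hq1, q', hq', rfl⟩, rfl⟩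
        refine ⟨hMinv ⟨_, hq1, rfl⟩, F q', hMinv ⟨q', hq', rfl⟩, (hFT q').symm⟩
    have hsub : M ⊆ T '' M :=
      (hMmin _ hmem Set.inter_subset_left).trans Set.inter_subset_right
    -- iterate: vertical shifts by `-n • c` stay in `M`
    have hiter : ∀ n : ℕ, ∀ p ∈ M, (p.1, p.2 - n * c) ∈ M := by
      intro n
      induction n with
      | zero => intro p hp; simpa using hp
      | succ n ih =>
        intro p hp
        obtain ⟨q, hq, hqp⟩ := hsub hp
        have hq1 : q.1 = p.1 := by
          have h1 := congrArg Prod.fst hqp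
          simpa only [hT] using h1
        have hq2 : q.2 = p.2 - c := by
          have h2 := congrArg Prod.snd hqp
          simp only [hT] at h2
          linarith
        have hres := ih q hq
        rw [hq1, hq2] at hres
        have heq : p.2 - c - n * c = p.2 - (n + 1 : ℕ) * c := by push_cast; ring
        rwa [heq] at hres
    obtain ⟨p, hp⟩ := hMne
    obtain ⟨n, hn⟩ := exists_nat_gt ((K₀ + |p.2|) / |c|)
    have hn' : K₀ + |p.2| < n * |c| := by
      rwa [div_lt_iff₀ (abs_pos.mpr hc0)] at hn
    have hb := hMbd _ (hiter n p hp)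
    simp only at hb
    have hlow : n * |c| - |p.2| ≤ |p.2 - n * c| := by
      have h1 : |(n : ℝ) * c| - |p.2| ≤ |p.2 - n * c| := by
        rw [abs_sub_comm]
        exact le_trans (sub_le_sub_right le_rfl _) (abs_sub_abs_le_abs_sub _ _)
      rwa [abs_mul, Nat.abs_cast] at h1
    linarith
  -- define u by choosing the unique point over each fiber
  have hex : ∀ x : X, ∃ t : ℝ, (x, t) ∈ M := by
    intro x
    have hx : x ∈ Prod.fst '' M := hproj ▸ Set.mem_univ x
    obtain ⟨⟨y, t⟩, hpM, rfl⟩ := hx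
    exact ⟨t, hpM⟩
  choose u hu using hex
  -- continuity of u : M is the graph of u, and fst : M ≃ X is a homeo
  haveI : CompactSpace M := isCompact_iff_compactSpace.mp hMcpt
  let e : M ≃ X :=
    { toFun := fun m => (m : X × ℝ).1
      invFun := fun x => ⟨(x, u x), hu x⟩
      left_inv := by
        rintro ⟨⟨x, t⟩, hm⟩
        exact Subtype.ext (Prod.ext rfl (huniq x _ _ (hu x) hm))
      right_inv := fun x => rfl }
  have hec : Continuous ⇑e := continuous_fst.comp continuous_subtype_val
  let h : M ≃ₜ X := hec.homeoOfEquivCompactToT2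
  have hucont : Continuous u := by
    have hrepr : u = (fun m : M => (m : X × ℝ).2) ∘ ⇑h.symm := rfl
    rw [hrepr]
    exact (continuous_snd.comp continuous_subtype_val).comp h.symm.continuous
  -- the cocycle equation
  have hcocycle : ∀ x, u (f x) - u x = φ x := by
    intro x
    have h1 : F (x, u x) ∈ M := hMeq ▸ ⟨(x, u x), hu x, rfl⟩
    have h2 : (f x, u x + φ x) ∈ M := h1
    have h3 := huniq (f x) _ _ (hu (f x)) h2
    linarith
  refine ⟨u, hucont, hcocycle, ?_⟩
  -- Birkhoff sums telescope
  have hbdd : BddAbove (Set.range fun y : X => |u y|) :=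
    (isCompact_range hucont.abs).bddAbove
  intro x n
  have htel : ∑ j ∈ range n, φ ((⇑f)^[j] x) = u ((⇑f)^[n] x) - u x := by
    induction n with
    | zero => simp
    | succ n ih =>
      rw [Finset.sum_range_succ, ih, Function.iterate_succ_apply']
      have := hcocycle ((⇑f)^[n] x)
      linarith
  rw [htel]
  calc |u ((⇑f)^[n] x) - u x| ≤ |u ((⇑f)^[n] x)| + |u x| := abs_sub _ _
    _ ≤ (⨆ y : X, |u y|) + ⨆ y : X, |u y| :=
        add_le_add (le_ciSup hbdd _) (le_ciSup hbdd _)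
    _ = 2 * ⨆ y : X, |u y| := by ring
end

section
/- Let f̃ : ℝ^d → ℝ^d be a lift of a torus homeomorphism homotopic to the identity. Then the rotation set ρ(f̃) is non-empty, compact, and connected. -/
/-- The Misiurewicz–Ziemian rotation set of a map `F : ℝ^d → ℝ^d`:
`ρ(F) = ⋂_{m≥0} closure ⋃_{n≥m} { (Fⁿ(z) - z)/n : z ∈ ℝ^d }`. -/
def rotSetD (d : ℕ) (F : (Fin d → ℝ) → (Fin d → ℝ)) : Set (Fin d → ℝ) :=
  ⋂ m : ℕ, closure {w | ∃ n : ℕ, m ≤ n ∧ ∃ z : Fin d → ℝ, w = (n : ℝ)⁻¹ • (F^[n] z - z)}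

/-!
Since `F - id` is continuous and `ℤ^d`-periodic it is bounded, say by `M`, so all averaged
displacements `(Fⁿ z - z)/n` lie in the closed ball of radius `M`: the rotation set is the
intersection of a decreasing sequence of non-empty compact sets. For connectedness, the set `Dₙ`
of averaged displacements at time `n` is connected (a continuous image of `ℝ^d`) and passes
within `2M/(n+1)` of `Dₙ₊₁`. So the `εₘ`-thickening of `⋃_{n ≥ m} Dₙ` is connected as soon as
`εₘ > 2M/(m+1)`; letting `εₘ → 0`, the closures of these thickenings form a decreasing sequence
of continua whose intersection is the rotation set.
-/

open Set Metric Filter Topology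

theorem IsPreconnected.iInter_of_directed {X ι : Type*} [TopologicalSpace X] [T2Space X]
    [Nonempty ι] {K : ι → Set X} (hdir : Directed (· ⊇ ·) K) (hcpt : ∀ i, IsCompact (K i))
    (hconn : ∀ i, IsPreconnected (K i)) : IsPreconnected (⋂ i, K i) := by
  have hclosed : IsClosed (⋂ i, K i) := isClosed_iInter fun i => (hcpt i).isClosed
  have hcpt' : IsCompact (⋂ i, K i) :=
    (hcpt (Classical.arbitrary ι)).of_isClosed_subset hclosed (iInter_subset _ _)
  rw [isPreconnected_iff_subset_of_fully_disjoint_closed hclosed]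
  intro u v hu hv hsub huv
  obtain ⟨U, V, hU, hV, huU, hvV, hUV⟩ := SeparatedNhds.of_isCompact_isCompact
    (hcpt'.inter_right hu) (hcpt'.inter_right hv) (huv.mono inter_subset_right inter_subset_right)
  have hsubUV : ⋂ i, K i ⊆ U ∪ V := fun x hx =>
    (hsub hx).imp (fun hxu => huU ⟨hx, hxu⟩) (fun hxv => hvV ⟨hx, hxv⟩)
  obtain ⟨i, hi⟩ := exists_subset_nhds_of_isCompact hdir hcpt
    fun x hx => (hU.union hV).mem_nhds (hsubUV hx)
  rcases (hconn i).subset_or_subset hU hV hUV hi with hiU | hiV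
  · refine Or.inl fun x hx => (hsub hx).resolve_right fun hxv => ?_
    exact hUV.notMem_of_mem_left (hiU (iInter_subset K i hx)) (hvV ⟨hx, hxv⟩)
  · refine Or.inr fun x hx => (hsub hx).resolve_left fun hxu => ?_
    exact hUV.notMem_of_mem_right (hiV (iInter_subset K i hx)) (huU ⟨hx, hxu⟩)

theorem IsPreconnected.thickening {E : Type*} [SeminormedAddCommGroup E] [NormedSpace ℝ E]
    {s : Set E} (hs : IsPreconnected s) (δ : ℝ) : IsPreconnected (thickening δ s) := by
  rw [← add_ball_zero, ← image2_add, ← image_prod]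
  exact (hs.prod (convex_ball 0 δ).isPreconnected).image _ continuous_add.continuousOn

/-- The Kuratowski upper limit of a sequence of sets. -/
def upperLimit {X : Type*} [TopologicalSpace X] (S : ℕ → Set X) : Set X :=
  ⋂ m, closure (⋃ n ≥ m, S n)

theorem iUnion_ge_subset_iUnion_ge {α : Type*} {S : ℕ → Set α} {m k : ℕ} (hmk : m ≤ k) :
    ⋃ n ≥ k, S n ⊆ ⋃ n ≥ m, S n :=
  iUnion₂_mono' fun n hn => ⟨n, hmk.trans hn, le_rfl⟩

section UpperLimit

variable {X : Type*} [PseudoMetricSpace X] {S : ℕ → Set X}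

theorem isCompact_upperLimit [ProperSpace X] (hS : Bornology.IsBounded (⋃ n, S n)) :
    IsCompact (upperLimit S) :=
  isCompact_of_isClosed_isBounded (isClosed_iInter fun _ => isClosed_closure)
    (hS.closure.subset ((iInter_subset _ 0).trans (closure_mono (iUnion₂_subset_iUnion _ _))))

theorem upperLimit_nonempty [ProperSpace X] (hS : Bornology.IsBounded (⋃ n, S n))
    (hne : ∀ n, (S n).Nonempty) : (upperLimit S).Nonempty :=
  IsCompact.nonempty_iInter_of_sequence_nonempty_isCompact_isClosed _
    (fun m => closure_mono (iUnion_ge_subset_iUnion_ge (Nat.le_succ m)))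
    (fun m => ((hne m).mono (subset_biUnion_of_mem (u := S) (le_refl m))).closure)
    (hS.subset (iUnion₂_subset_iUnion _ _)).isCompact_closure (fun _ => isClosed_closure)

theorem upperLimit_eq_iInter_closure_thickening {η : ℕ → ℝ} (hpos : ∀ m, 0 < η m)
    (hη : Tendsto η atTop (𝓝 0)) :
    upperLimit S = ⋂ m, closure (thickening (η m) (⋃ n ≥ m, S n)) := by
  refine subset_antisymm (iInter_mono fun m => closure_mono (self_subset_thickening (hpos m) _))
    fun x hx => mem_iInter.2 fun m => ?_
  rw [closure_eq_iInter_cthickening]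
  refine mem_iInter₂.2 fun δ hδ => ?_
  obtain ⟨k, hk, hmk⟩ := ((hη.eventually (gt_mem_nhds hδ)).and (eventually_ge_atTop m)).exists
  refine (closure_thickening_subset_cthickening _ _).trans ?_ (mem_iInter.1 hx k)
  exact (cthickening_mono hk.le _).trans
    (cthickening_subset_of_subset _ (iUnion_ge_subset_iUnion_ge hmk))

end UpperLimit

section UpperLimitNormed

variable {E : Type*} [NormedAddCommGroup E] [NormedSpace ℝ E] {S : ℕ → Set E} {η : ℕ → ℝ}

theorem isPreconnected_thickening_iUnion_ge (hS : ∀ n, IsPreconnected (S n))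
    (hη : Antitone η) (hgap : ∀ n, ∃ x ∈ S n, ∃ y ∈ S (n + 1), dist x y < η n) (m : ℕ) :
    IsPreconnected (thickening (η m) (⋃ n ≥ m, S n)) := by
  simp only [thickening_iUnion]
  refine IsPreconnected.biUnion_of_chain (t := Ici m) ordConnected_Ici
    (fun n _ => (hS n).thickening _) fun n hn _ => ?_
  obtain ⟨x, hx, y, hy, hxy⟩ := hgap n
  have hyx : dist y x < η m := dist_comm x y ▸ hxy.trans_le (hη hn)
  exact ⟨y, mem_thickening_iff.2 ⟨x, hx, hyx⟩,
    self_subset_thickening (dist_nonneg.trans_lt hyx) _ hy⟩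

theorem isPreconnected_upperLimit [ProperSpace E] (hS : ∀ n, IsPreconnected (S n))
    (hbdd : Bornology.IsBounded (⋃ n, S n)) (hη : Antitone η) (hη0 : Tendsto η atTop (𝓝 0))
    (hgap : ∀ n, ∃ x ∈ S n, ∃ y ∈ S (n + 1), dist x y < η n) :
    IsPreconnected (upperLimit S) := by
  have hpos : ∀ m, 0 < η m := fun m =>
    let ⟨_, _, _, _, h⟩ := hgap m
    dist_nonneg.trans_lt h
  rw [upperLimit_eq_iInter_closure_thickening hpos hη0]
  refine IsPreconnected.iInter_of_directed (Antitone.directed_ge fun m k hmk => ?_)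
    (fun m => (hbdd.subset (iUnion₂_subset_iUnion _ _)).thickening.isCompact_closure)
    (fun m => (isPreconnected_thickening_iUnion_ge hS hη hgap m).closure)
  exact closure_mono ((thickening_mono (hη hmk) _).trans
    (thickening_subset_of_subset _ (iUnion_ge_subset_iUnion_ge hmk)))

end UpperLimitNormed

section MeanDisplacement

variable {E : Type*} [NormedAddCommGroup E] {F : E → E} {M : ℝ}

theorem norm_iterate_sub_le (hM : ∀ z, ‖F z - z‖ ≤ M) (n : ℕ) (z : E) :
    ‖F^[n] z - z‖ ≤ n * M := by
  induction n with
  | zero => simp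
  | succ n ih =>
    calc ‖F^[n + 1] z - z‖ = ‖(F (F^[n] z) - F^[n] z) + (F^[n] z - z)‖ := by
          rw [Function.iterate_succ_apply', sub_add_sub_cancel]
      _ ≤ M + n * M := (norm_add_le _ _).trans (add_le_add (hM _) ih)
      _ = (n + 1 : ℕ) * M := by push_cast; ring

variable [NormedSpace ℝ E]

noncomputable def meanDisplacement (F : E → E) (n : ℕ) (z : E) : E :=
  (n : ℝ)⁻¹ • (F^[n] z - z)

theorem continuous_meanDisplacement (hF : Continuous F) (n : ℕ) :
    Continuous (meanDisplacement F n) :=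
  ((hF.iterate n).sub continuous_id).const_smul _

theorem natCast_smul_meanDisplacement (F : E → E) (n : ℕ) (z : E) :
    (n : ℝ) • meanDisplacement F n z = F^[n] z - z := by
  rcases Nat.eq_zero_or_pos n with rfl | hn
  · simp
  · exact smul_inv_smul₀ (by positivity) _

theorem norm_meanDisplacement_le (hM : ∀ z, ‖F z - z‖ ≤ M) (n : ℕ) (z : E) :
    ‖meanDisplacement F n z‖ ≤ M := by
  rcases Nat.eq_zero_or_pos n with rfl | hn
  · simpa [meanDisplacement] using (norm_nonneg _).trans (hM z)
  · refine le_of_mul_le_mul_left ?_ (Nat.cast_pos.2 hn : (0 : ℝ) < n)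
    rw [← Real.norm_natCast n, ← norm_smul, natCast_smul_meanDisplacement, Real.norm_natCast]
    exact norm_iterate_sub_le hM n z

theorem meanDisplacement_succ_sub (F : E → E) (n : ℕ) (z : E) :
    meanDisplacement F (n + 1) z - meanDisplacement F n z =
      ((n : ℝ) + 1)⁻¹ • ((F (F^[n] z) - F^[n] z) - meanDisplacement F n z) := by
  have h := natCast_smul_meanDisplacement F (n + 1) z
  push_cast at h
  rw [eq_inv_smul_iff₀ (by positivity), smul_sub, h, add_smul, one_smul,
    natCast_smul_meanDisplacement, Function.iterate_succ_apply']
  abel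

theorem norm_meanDisplacement_succ_sub_le (hM : ∀ z, ‖F z - z‖ ≤ M) (n : ℕ) (z : E) :
    ‖meanDisplacement F (n + 1) z - meanDisplacement F n z‖ ≤ 2 * M / (n + 1) := by
  rw [meanDisplacement_succ_sub, norm_smul, norm_inv, Real.norm_of_nonneg (by positivity),
    inv_mul_eq_div, two_mul]
  gcongr
  exact (norm_sub_le _ _).trans (add_le_add (hM _) (norm_meanDisplacement_le hM n z))

theorem dist_meanDisplacement_succ_lt (hM : ∀ z, ‖F z - z‖ ≤ M) (n : ℕ) (z : E) :
    dist (meanDisplacement F n z) (meanDisplacement F (n + 1) z) < (2 * M + 1) / (n + 1) := by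
  rw [dist_comm, dist_eq_norm]
  exact (norm_meanDisplacement_succ_sub_le hM n z).trans_lt (by gcongr; linarith)

theorem isBounded_iUnion_range_meanDisplacement (hM : ∀ z, ‖F z - z‖ ≤ M) :
    Bornology.IsBounded (⋃ n, range (meanDisplacement F n)) :=
  isBounded_closedBall.subset <| iUnion_subset fun n => range_subset_iff.2 fun z =>
    mem_closedBall_zero_iff.2 (norm_meanDisplacement_le hM n z)

end MeanDisplacement

theorem exists_norm_le_of_periodic {ι E : Type*} [Fintype ι] [SeminormedAddCommGroup E]
    {g : (ι → ℝ) → E} (hg : Continuous g)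
    (hper : ∀ z (p : ι → ℤ), g (z + fun i => (p i : ℝ)) = g z) : ∃ C, ∀ z, ‖g z‖ ≤ C := by
  obtain ⟨C, hC⟩ := (isCompact_Icc (a := (0 : ι → ℝ)) (b := 1)).exists_bound_of_continuousOn
    hg.continuousOn
  refine ⟨C, fun z => ?_⟩
  have hz : z = (fun i => Int.fract (z i)) + fun i => ((⌊z i⌋ : ℤ) : ℝ) := by
    ext i; exact (Int.fract_add_floor (z i)).symm
  rw [hz, hper]
  exact hC _ ⟨fun i => Int.fract_nonneg _, fun i => (Int.fract_lt_one _).le⟩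

theorem rotSetD_eq_upperLimit (d : ℕ) (F : (Fin d → ℝ) → (Fin d → ℝ)) :
    rotSetD d F = upperLimit fun n => range (meanDisplacement F n) := by
  simp only [rotSetD, upperLimit]
  congr! 3 with m
  ext w
  simp [meanDisplacement, eq_comm]

/-- For a lift `ft` of a torus homeomorphism homotopic to the identity (i.e. a homeomorphism
of `ℝ^d` commuting with all integer translations), the rotation set is non-empty, compact
and connected. -/
theorem rotSet_nonempty_compact_connected
    (d : ℕ) (ft : (Fin d → ℝ) ≃ₜ (Fin d → ℝ))
    (hlift : ∀ z : Fin d → ℝ, ∀ p : Fin d → ℤ,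
      ft (z + fun i => (p i : ℝ)) = ft z + fun i => (p i : ℝ)) :
    (rotSetD d (⇑ft)).Nonempty ∧ IsCompact (rotSetD d (⇑ft)) ∧
      IsConnected (rotSetD d (⇑ft)) := by
  obtain ⟨M, hM⟩ := exists_norm_le_of_periodic (ft.continuous.sub continuous_id)
    fun z p => by simp only [Pi.sub_apply, id, hlift]; abel
  have hM0 : 0 ≤ M := (norm_nonneg _).trans (hM 0)
  have hη : Antitone fun n : ℕ => (2 * M + 1) / (n + 1) := fun m n hmn => by
    dsimp only; gcongr
  have hη0 : Tendsto (fun n : ℕ => (2 * M + 1) / (n + 1)) atTop (𝓝 0) := by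
    simpa [div_eq_mul_inv] using tendsto_one_div_add_atTop_nhds_zero_nat.const_mul (2 * M + 1)
  have hbdd := isBounded_iUnion_range_meanDisplacement hM
  rw [rotSetD_eq_upperLimit]
  have hne := upperLimit_nonempty hbdd fun n => range_nonempty _
  refine ⟨hne, isCompact_upperLimit hbdd, hne, isPreconnected_upperLimit
    (fun n => isPreconnected_range (continuous_meanDisplacement ft.continuous n)) hbdd hη hη0
    fun n => ⟨_, mem_range_self 0, _, mem_range_self 0, ?_⟩⟩
  exact dist_meanDisplacement_succ_lt hM n 0
end

section
/- Let f : T² → T² be a minimal homeomorphism homotopic to the identity. Then f is not annular: there do not exist a lift f̃ of f, a constant M > 0 and a vector v ∈ S¹ of rational slope such that |⟨f̃ⁿ(z) - z, v⟩| ≤ M for all z ∈ ℝ² and all n ∈ ℤ. -/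
/-- The two-dimensional torus `T² = ℝ²/ℤ²`. -/
abbrev T2 := AddCircle (1 : ℝ) × AddCircle (1 : ℝ)

/-- The canonical projection `ℝ² → T²`. -/
noncomputable def proj (z : ℝ × ℝ) : T2 := ((z.1 : AddCircle (1 : ℝ)), (z.2 : AddCircle (1 : ℝ)))

/-- The `n`-th iterate (for `n : ℤ`) of a homeomorphism, as a map. -/
def zIter {X : Type*} [TopologicalSpace X] (f : X ≃ₜ X) (n : ℤ) : X → X :=
  fun x => if 0 ≤ n then (⇑f)^[n.toNat] x else (⇑f.symm)^[(-n).toNat] x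

/-!
Let `φ z = ⟨z, v⟩` and, for `t : ℝ`, let `U t` be the set of points whose `ft`-orbit meets
`{φ < t}`. Bounded displacement puts the frontier of `closure (U t)` in the strip
`t ≤ φ ≤ t + M`, so it is a nonempty, closed, nowhere dense, `ft`-invariant set, and translation by
`w ∈ ℤ²` carries it to the frontier at level `t - φ w`. Rational slope gives `φ(ℤ²) ⊆ rℤ` for some
`r > 0`, so the union of these frontiers over the levels in `rℤ` is locally finite, hence closed,
and `ℤ²`-periodic. It projects to a closed `f`-invariant subset of `T²` which is nonempty and, by
Baire's theorem, not all of `T²`.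
-/

open Set Topology

theorem Homeomorph.coe_pow {X : Type*} [TopologicalSpace X] (f : X ≃ₜ X) (n : ℕ) :
    ⇑(f ^ n) = (⇑f)^[n] := by
  induction n with
  | zero => rfl
  | succ n ih => rw [pow_succ', Function.iterate_succ', ← ih]; rfl

theorem zIter_eq_zpow {X : Type*} [TopologicalSpace X] (f : X ≃ₜ X) (n : ℤ) :
    zIter f n = ⇑(f ^ n) := by
  funext x
  obtain ⟨k, rfl | rfl⟩ := Int.eq_nat_or_neg n
  · simp [zIter, Homeomorph.coe_pow]
  · rcases k.eq_zero_or_pos with rfl | hk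
    · simp [zIter]
    · simp [zIter, hk.ne', ← inv_pow, Homeomorph.coe_pow]
      rfl

section OrbitSublevel

variable {X : Type*} [TopologicalSpace X] (F : X ≃ₜ X) (φ : X → ℝ)

def orbitSublevel (t : ℝ) : Set X := ⋃ n : ℤ, ⇑(F ^ n) ⁻¹' {z | φ z < t}

def orbitFrontier (t : ℝ) : Set X := frontier (closure (orbitSublevel F φ t))

def orbitFrontiers (r : ℝ) : Set X := ⋃ k : ℤ, orbitFrontier F φ (k * r)

variable {F φ}

theorem preimage_orbitSublevel_self (t : ℝ) :
    F ⁻¹' orbitSublevel F φ t = orbitSublevel F φ t := by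
  ext z
  simp only [orbitSublevel, mem_preimage, mem_iUnion, mem_ofPred_eq]
  constructor
  · rintro ⟨n, hn⟩
    exact ⟨n + 1, by rwa [zpow_add_one]⟩
  · rintro ⟨n, hn⟩
    exact ⟨n - 1, by rwa [← Homeomorph.mul_apply, ← zpow_add_one, sub_add_cancel]⟩

theorem preimage_orbitSublevel_of_commute {T : X ≃ₜ X} (hT : Commute F T) {a : ℝ}
    (hφT : ∀ z, φ (T z) = φ z + a) (t : ℝ) :
    T ⁻¹' orbitSublevel F φ t = orbitSublevel F φ (t - a) := by
  ext z
  simp only [orbitSublevel, mem_preimage, mem_iUnion, mem_ofPred_eq]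
  refine exists_congr fun n => ?_
  rw [← Homeomorph.mul_apply, (hT.zpow_left n).eq, Homeomorph.mul_apply, hφT, lt_sub_iff_add_lt]

theorem preimage_orbitFrontier {T : X ≃ₜ X} {t s : ℝ}
    (h : T ⁻¹' orbitSublevel F φ t = orbitSublevel F φ s) :
    T ⁻¹' orbitFrontier F φ t = orbitFrontier F φ s := by
  rw [orbitFrontier, Homeomorph.preimage_frontier, Homeomorph.preimage_closure, h, orbitFrontier]

theorem isClosed_orbitFrontier (t : ℝ) : IsClosed (orbitFrontier F φ t) := isClosed_frontier

theorem isNowhereDense_orbitFrontier (t : ℝ) : IsNowhereDense (orbitFrontier F φ t) :=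
  isClosed_frontier.isNowhereDense_iff.2 (interior_frontier isClosed_closure)

theorem isMeagre_orbitFrontiers (r : ℝ) : IsMeagre (orbitFrontiers F φ r) :=
  isMeagre_iUnion fun _ => (isNowhereDense_orbitFrontier _).isMeagre

theorem orbitFrontiers_ne_univ [BaireSpace X] [Nonempty X] (r : ℝ) :
    orbitFrontiers F φ r ≠ univ := fun h =>
  not_isMeagre_of_isOpen isOpen_univ univ_nonempty (h ▸ isMeagre_orbitFrontiers r)

theorem preimage_orbitFrontiers_self (r : ℝ) :
    F ⁻¹' orbitFrontiers F φ r = orbitFrontiers F φ r := by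
  simp only [orbitFrontiers, preimage_iUnion,
    preimage_orbitFrontier (preimage_orbitSublevel_self _)]

theorem preimage_orbitFrontiers_of_commute {T : X ≃ₜ X} (hT : Commute F T) {r : ℝ} {j : ℤ}
    (hφT : ∀ z, φ (T z) = φ z + j * r) :
    T ⁻¹' orbitFrontiers F φ r = orbitFrontiers F φ r := by
  have shift : ∀ k : ℤ, (k : ℝ) * r - j * r = ((k - j : ℤ) : ℝ) * r := fun k => by push_cast; ring
  simp only [orbitFrontiers, preimage_iUnion,
    preimage_orbitFrontier (preimage_orbitSublevel_of_commute hT hφT _), shift]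
  exact (Equiv.subRight j).surjective.iUnion_comp fun k => orbitFrontier F φ (k * r)

theorem preimage_add_orbitFrontiers [AddGroup X] [SeparatelyContinuousAdd X] {u : X}
    (hFu : ∀ z, F (z + u) = F z + u) {r : ℝ} {j : ℤ} (hφu : ∀ z, φ (z + u) = φ z + j * r) :
    (· + u) ⁻¹' orbitFrontiers F φ r = orbitFrontiers F φ r :=
  preimage_orbitFrontiers_of_commute (T := Homeomorph.addRight u) (Homeomorph.ext hFu) hφu

variable {M : ℝ} (hM : ∀ (n : ℤ) z, |φ ((F ^ n) z) - φ z| ≤ M)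
include hM

theorem closure_orbitSublevel_subset (hφ : Continuous φ) (t : ℝ) :
    closure (orbitSublevel F φ t) ⊆ {z | φ z ≤ t + M} := by
  refine closure_minimal ?_ (isClosed_le hφ continuous_const)
  simp only [orbitSublevel, iUnion_subset_iff]
  intro n z hz
  have hz : φ ((F ^ n) z) < t := hz
  show φ z ≤ t + M
  linarith [(abs_le.1 (hM n z)).1]

theorem orbitFrontier_subset (hφ : Continuous φ) (t : ℝ) :
    orbitFrontier F φ t ⊆ φ ⁻¹' Icc t (t + M) := by
  intro z hz
  have sublevel_subset : {z | φ z < t} ⊆ interior (closure (orbitSublevel F φ t)) :=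
    interior_maximal (fun z hz => subset_closure (mem_iUnion.2 ⟨0, hz⟩))
      (isOpen_lt hφ continuous_const)
  refine ⟨not_lt.1 fun hlt => hz.2 (sublevel_subset hlt), ?_⟩
  exact closure_orbitSublevel_subset hM hφ t (isClosed_closure.frontier_subset hz)

theorem orbitFrontier_nonempty [PreconnectedSpace X] (hφ : Continuous φ)
    (hφs : Function.Surjective φ) (t : ℝ) : (orbitFrontier F φ t).Nonempty := by
  obtain ⟨x, hx⟩ := hφs (t - 1)
  obtain ⟨y, hy⟩ := hφs (t + M + 1)
  refine nonempty_frontier_iff.2 ⟨⟨x, subset_closure (mem_iUnion.2 ⟨0, ?_⟩)⟩, fun h => ?_⟩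
  · simp [hx]
  · have := closure_orbitSublevel_subset hM hφ t (h ▸ mem_univ y)
    simp only [mem_ofPred_eq, hy] at this
    linarith

theorem orbitFrontiers_nonempty [PreconnectedSpace X] (hφ : Continuous φ)
    (hφs : Function.Surjective φ) (r : ℝ) : (orbitFrontiers F φ r).Nonempty :=
  (orbitFrontier_nonempty hM hφ hφs _).mono
    (subset_iUnion (fun k : ℤ => orbitFrontier F φ (k * r)) 0)

theorem isClosed_orbitFrontiers (hφ : Continuous φ) {r : ℝ} (hr : 0 < r) :
    IsClosed (orbitFrontiers F φ r) := by
  refine LocallyFinite.isClosed_iUnion (fun z => ?_) (fun k => isClosed_orbitFrontier _)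
  refine ⟨φ ⁻¹' Ioo (φ z - 1) (φ z + 1), (isOpen_Ioo.preimage hφ).mem_nhds (by simp), ?_⟩
  refine (finite_Icc ⌈(φ z - 1 - M) / r⌉ ⌊(φ z + 1) / r⌋).subset ?_
  rintro k ⟨y, hyk, hy1, hy2⟩
  obtain ⟨hk1, hk2⟩ := orbitFrontier_subset hM hφ _ hyk
  constructor
  · rw [Int.ceil_le, div_le_iff₀ hr]
    linarith
  · rw [Int.le_floor, le_div_iff₀ hr]
    linarith

end OrbitSublevel

theorem exists_pos_forall_dotProduct_eq_intCast_mul {v : ℝ × ℝ} (hv : v ≠ 0) {p q : ℤ}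
    (hpq : (p, q) ≠ (0, 0)) (hslope : (p : ℝ) * v.1 + q * v.2 = 0) :
    ∃ r > 0, ∀ w : ℤ × ℤ, ∃ j : ℤ, (w.1 : ℝ) * v.1 + w.2 * v.2 = j * r := by
  have hnorm : (p : ℝ) ^ 2 + q ^ 2 ≠ 0 := by
    intro h
    have hp : (p : ℝ) = 0 := by nlinarith [sq_nonneg (p : ℝ), sq_nonneg (q : ℝ)]
    have hq : (q : ℝ) = 0 := by nlinarith [sq_nonneg (p : ℝ), sq_nonneg (q : ℝ)]
    exact hpq (by simp_all)
  -- `v` is orthogonal to `(p, q)`, hence equal to `l • (-q, p)`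
  set l := (p * v.2 - q * v.1) / (p ^ 2 + q ^ 2)
  have hv1 : v.1 = -q * l := by
    simp only [l]; field_simp; linear_combination (p : ℝ) * hslope
  have hv2 : v.2 = p * l := by
    simp only [l]; field_simp; linear_combination (q : ℝ) * hslope
  have hl : l ≠ 0 := fun h => hv (Prod.ext (by simp [hv1, h]) (by simp [hv2, h]))
  have key : ∀ w : ℤ × ℤ, (w.1 : ℝ) * v.1 + w.2 * v.2 = ((p * w.2 - q * w.1 : ℤ) : ℝ) * l := by
    intro w; rw [hv1, hv2]; push_cast; ring
  rcases hl.lt_or_gt with hneg | hpos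
  · exact ⟨-l, neg_pos.2 hneg, fun w => ⟨-(p * w.2 - q * w.1), by rw [key]; push_cast; ring⟩⟩
  · exact ⟨l, hpos, fun w => ⟨_, key w⟩⟩

theorem isOpenQuotientMap_proj : IsOpenQuotientMap proj :=
  QuotientAddGroup.isOpenQuotientMap_mk.prodMap QuotientAddGroup.isOpenQuotientMap_mk

theorem proj_eq_proj_iff {y z : ℝ × ℝ} :
    proj y = proj z ↔ ∃ w : ℤ × ℤ, y + ((w.1 : ℝ), (w.2 : ℝ)) = z := by
  have coe_eq_coe : ∀ a b : ℝ, (a : AddCircle (1 : ℝ)) = b ↔ ∃ n : ℤ, a + n = b := by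
    intro a b
    rw [eq_comm, ← sub_eq_zero, ← AddCircle.coe_sub, AddCircle.coe_eq_zero_iff]
    simp [eq_sub_iff_add_eq, add_comm]
  simp only [proj, coe_eq_coe, Prod.ext_iff, Prod.fst_add, Prod.snd_add]
  constructor
  · rintro ⟨⟨m, hm⟩, ⟨n, hn⟩⟩
    exact ⟨(m, n), hm, hn⟩
  · rintro ⟨w, h1, h2⟩
    exact ⟨⟨_, h1⟩, ⟨_, h2⟩⟩

theorem preimage_proj_image {E : Set (ℝ × ℝ)}
    (hE : ∀ w : ℤ × ℤ, (· + ((w.1 : ℝ), (w.2 : ℝ))) ⁻¹' E = E) :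
    proj ⁻¹' (proj '' E) = E := by
  refine Subset.antisymm ?_ (subset_preimage_image _ _)
  rintro z ⟨y, hy, hyz⟩
  obtain ⟨w, rfl⟩ := proj_eq_proj_iff.1 hyz
  rw [← hE w] at hy
  exact hy

theorem eq_empty_or_univ_of_lift_invariant {f : T2 ≃ₜ T2}
    (hmin : ∀ A : Set T2, IsClosed A → (⇑f) '' A = A → A = ∅ ∨ A = Set.univ)
    {ft : (ℝ × ℝ) ≃ₜ (ℝ × ℝ)} (hlift : ∀ z, proj (ft z) = f (proj z))
    {E : Set (ℝ × ℝ)} (hEc : IsClosed E) (hEft : ft ⁻¹' E = E)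
    (hE : ∀ w : ℤ × ℤ, (· + ((w.1 : ℝ), (w.2 : ℝ))) ⁻¹' E = E) : E = ∅ ∨ E = univ := by
  have hsat := preimage_proj_image hE
  have hK : IsClosed (proj '' E) := by
    rwa [← isOpenQuotientMap_proj.isQuotientMap.isCoinducing.isClosed_preimage, hsat]
  have hfK : f ⁻¹' (proj '' E) = proj '' E := by
    have hcomm : ⇑f ∘ proj = proj ∘ ft := funext fun z => (hlift z).symm
    apply isOpenQuotientMap_proj.surjective.preimage_injective
    rw [← preimage_comp, hcomm, preimage_comp, hsat, hEft]
  have hfK' : f '' (proj '' E) = proj '' E := by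
    conv_lhs => rw [← hfK]
    exact f.surjective.image_preimage _
  rcases hmin _ hK hfK' with h | h
  · left; rw [← hsat, h, preimage_empty]
  · right; rw [← hsat, h, preimage_univ]

theorem minimal_not_annular_general
    (f : T2 ≃ₜ T2)
    (hmin : ∀ A : Set T2, IsClosed A → (⇑f) '' A = A → A = ∅ ∨ A = Set.univ) :
    ¬ ∃ (ft : (ℝ × ℝ) ≃ₜ (ℝ × ℝ)) (M : ℝ) (v : ℝ × ℝ),
      (∀ z, proj (ft z) = f (proj z)) ∧
      (∀ z : ℝ × ℝ, ∀ p : ℤ × ℤ, ft (z + ((p.1 : ℝ), (p.2 : ℝ))) = ft z + ((p.1 : ℝ), (p.2 : ℝ))) ∧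
      0 < M ∧ v.1 ^ 2 + v.2 ^ 2 = 1 ∧
      (∃ p q : ℤ, (p, q) ≠ (0, 0) ∧ (p : ℝ) * v.1 + (q : ℝ) * v.2 = 0) ∧
      (∀ z : ℝ × ℝ, ∀ n : ℤ,
        |(zIter ft n z - z).1 * v.1 + (zIter ft n z - z).2 * v.2| ≤ M) := by
  rintro ⟨ft, M, v, hlift, hper, -, hv, ⟨p, q, hpq, hslope⟩, hbdd⟩
  set φ : ℝ × ℝ → ℝ := fun z => z.1 * v.1 + z.2 * v.2
  have hφ : Continuous φ := by fun_prop
  have hφs : Function.Surjective φ := fun s => ⟨(s * v.1, s * v.2), by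
    simp only [φ]; linear_combination s * hv⟩
  have hM : ∀ (n : ℤ) z, |φ ((ft ^ n) z) - φ z| ≤ M := fun n z => by
    convert hbdd z n using 2
    simp only [φ, zIter_eq_zpow, Prod.fst_sub, Prod.snd_sub]
    ring
  obtain ⟨r, hr, hφr⟩ := exists_pos_forall_dotProduct_eq_intCast_mul
    (by rintro rfl; simp at hv) hpq hslope
  have hE : ∀ w : ℤ × ℤ, (· + ((w.1 : ℝ), (w.2 : ℝ))) ⁻¹' orbitFrontiers ft φ r =
      orbitFrontiers ft φ r := fun w => by
    obtain ⟨j, hj⟩ := hφr w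
    refine preimage_add_orbitFrontiers (hper · w) (j := j) fun z => ?_
    simp only [φ, Prod.fst_add, Prod.snd_add]
    linear_combination hj
  rcases eq_empty_or_univ_of_lift_invariant hmin hlift (isClosed_orbitFrontiers hM hφ hr)
    (preimage_orbitFrontiers_self r) hE with h | h
  · exact (orbitFrontiers_nonempty hM hφ hφs r).ne_empty h
  · exact orbitFrontiers_ne_univ r h

/-- A minimal homeomorphism of `T²` homotopic to the identity is not annular: there are no
lift `ft` of `f`, constant `M > 0` and unit vector `v` of rational slope with
`|⟨ftⁿ(z) - z, v⟩| ≤ M` for all `z ∈ ℝ²` and all `n ∈ ℤ`. -/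
theorem minimal_not_annular
    (f : T2 ≃ₜ T2)
    (hmin : ∀ A : Set T2, IsClosed A → (⇑f) '' A = A → A = ∅ ∨ A = Set.univ)
    (hhomotopic : ∃ g : (ℝ × ℝ) ≃ₜ (ℝ × ℝ),
      (∀ z, proj (g z) = f (proj z)) ∧
      (∀ z : ℝ × ℝ, ∀ p : ℤ × ℤ, g (z + ((p.1 : ℝ), (p.2 : ℝ))) = g z + ((p.1 : ℝ), (p.2 : ℝ)))) :
    ¬ ∃ (ft : (ℝ × ℝ) ≃ₜ (ℝ × ℝ)) (M : ℝ) (v : ℝ × ℝ),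
      (∀ z, proj (ft z) = f (proj z)) ∧
      (∀ z : ℝ × ℝ, ∀ p : ℤ × ℤ, ft (z + ((p.1 : ℝ), (p.2 : ℝ))) = ft z + ((p.1 : ℝ), (p.2 : ℝ))) ∧
      0 < M ∧ v.1 ^ 2 + v.2 ^ 2 = 1 ∧
      (∃ p q : ℤ, (p, q) ≠ (0, 0) ∧ (p : ℝ) * v.1 + (q : ℝ) * v.2 = 0) ∧
      (∀ z : ℝ × ℝ, ∀ n : ℤ,
        |(zIter ft n z - z).1 * v.1 + (zIter ft n z - z).2 * v.2| ≤ M) :=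
  minimal_not_annular_general f hmin
end

section
/- Let v ∈ S¹ ⊂ ℝ² be a unit vector with nonzero first coordinate. Then for every ε > 0 there exists N ∈ ℕ such that for every n ∈ ℤ, there exist p ∈ {n, n+1, …, n+N} and a lattice point p⃗ ∈ ℤ² with |⟨p⃗, v⟩| ≤ ε and second coordinate pr₂(p⃗) = p. -/
/-! With `α = v.2 / v.1` we have `|a * v.1 + p * v.2| = |v.1| * |p * α + a|`, so it suffices that
the `p` with `p * α` within `δ = ε / |v.1|` of an integer have bounded gaps. By Dirichlet some
`q > 0` makes `β = q * α - m` satisfy `|β| ≤ δ`. Then `(q * j) * α ≡ j * β` modulo `1`, and among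
any `⌈|β|⁻¹⌉ + 1` consecutive `j` there is one with `j * β` within `|β|` of an integer. -/

/-- The first `k` with `k * b ≥ ⌊s⌋ + 1 - s` works. -/
lemma exists_add_nat_mul_near_int (s : ℝ) {b : ℝ} (hb : 0 < b) :
    ∃ k : ℕ, k ≤ ⌈b⁻¹⌉₊ ∧ ∃ m : ℤ, |s + k * b - m| ≤ b := by
  set t : ℝ := ⌊s⌋ + 1 - s
  have ht₀ : 0 < t := by linarith [Int.lt_floor_add_one s]
  have ht₁ : t ≤ 1 := by linarith [Int.floor_le s]
  refine ⟨⌈t / b⌉₊, Nat.ceil_mono ?_, ⌊s⌋ + 1, ?_⟩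
  · rw [inv_eq_one_div]
    gcongr
  have hlow : t ≤ ⌈t / b⌉₊ * b := (div_le_iff₀ hb).1 (Nat.le_ceil _)
  have hupp : ⌈t / b⌉₊ * b < t + b := by
    have hceil := Nat.ceil_lt_add_one (div_pos ht₀ hb).le
    have hprev : ((⌈t / b⌉₊ : ℝ) - 1) * b < t := (lt_div_iff₀ hb).1 (by linarith)
    linarith [sub_mul (⌈t / b⌉₊ : ℝ) 1 b]
  rw [abs_le]
  push_cast
  constructor <;> linarith

/-- For `β = 0` the window is `{c}` (as `0⁻¹ = 0`), and `c * β = 0` is an integer. -/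
lemma exists_int_mul_near_int_in_window (β : ℝ) (c : ℤ) :
    ∃ k : ℕ, k ≤ ⌈|β|⁻¹⌉₊ ∧ ∃ m : ℤ, |(c + k) * β - m| ≤ |β| := by
  rcases lt_trichotomy β 0 with hβ | rfl | hβ
  · obtain ⟨k, hk, m, hm⟩ := exists_add_nat_mul_near_int (-(c * β)) (neg_pos.2 hβ)
    refine ⟨k, by rwa [abs_of_neg hβ], -m, ?_⟩
    rw [abs_of_neg hβ, ← abs_neg]
    convert hm using 2
    push_cast
    ring
  · exact ⟨0, Nat.zero_le _, 0, by simp⟩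
  · obtain ⟨k, hk, m, hm⟩ := exists_add_nat_mul_near_int (c * β) hβ
    refine ⟨k, by rwa [abs_of_pos hβ], m, ?_⟩
    rw [abs_of_pos hβ, add_mul]
    exact hm

lemma exists_pos_int_mul_near_int (α : ℝ) {δ : ℝ} (hδ : 0 < δ) :
    ∃ q : ℤ, 0 < q ∧ ∃ m : ℤ, |q * α - m| ≤ δ := by
  have hn : 0 < ⌈δ⁻¹⌉₊ := Nat.ceil_pos.2 (inv_pos.2 hδ)
  obtain ⟨m, q, hq, -, hqm⟩ := Real.exists_int_int_abs_mul_sub_le α hn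
  refine ⟨q, hq, m, hqm.trans ?_⟩
  rw [div_le_iff₀ (by positivity), ← div_le_iff₀' hδ, one_div]
  linarith [Nat.le_ceil δ⁻¹]

theorem exists_bounded_gaps_int_mul_near_int (α : ℝ) {δ : ℝ} (hδ : 0 < δ) :
    ∃ N : ℕ, ∀ n : ℤ, ∃ p : ℤ, n ≤ p ∧ p ≤ n + N ∧ ∃ m : ℤ, |p * α - m| ≤ δ := by
  obtain ⟨q, hq, m, hqm⟩ := exists_pos_int_mul_near_int α hδ
  set β := q * α - m
  refine ⟨q.toNat * (⌈|β|⁻¹⌉₊ + 1), fun n => ?_⟩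
  set c := n / q + 1
  have hc : n < q * c ∧ q * c ≤ n + q := by
    constructor <;>
      linarith [Int.emod_add_mul_ediv n q, Int.emod_nonneg n hq.ne', Int.emod_lt_of_pos n hq]
  obtain ⟨k, hk, m', hm'⟩ := exists_int_mul_near_int_in_window β c
  refine ⟨q * (c + k), by nlinarith, ?_, (c + k) * m + m', ?_⟩
  · have hqk : q * k ≤ q * ⌈|β|⁻¹⌉₊ := mul_le_mul_of_nonneg_left (by exact_mod_cast hk) hq.le
    push_cast [Int.toNat_of_nonneg hq.le]
    linarith
  · calc |((q * (c + k) : ℤ) : ℝ) * α - ((c + k) * m + m' : ℤ)| = |(c + k) * β - m'| := by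
          push_cast [β]
          congr 1
          ring
      _ ≤ δ := hm'.trans hqm

theorem lattice_points_near_line_bounded_gaps_general
    (v : ℝ × ℝ) (hv1 : v.1 ≠ 0) :
    ∀ ε : ℝ, 0 < ε → ∃ N : ℕ, ∀ n : ℤ, ∃ p : ℤ, n ≤ p ∧ p ≤ n + N ∧
      ∃ a : ℤ, |(a : ℝ) * v.1 + (p : ℝ) * v.2| ≤ ε := by
  intro ε hε
  have hv : 0 < |v.1| := abs_pos.2 hv1
  obtain ⟨N, hN⟩ := exists_bounded_gaps_int_mul_near_int (v.2 / v.1) (div_pos hε hv)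
  refine ⟨N, fun n => ?_⟩
  obtain ⟨p, hnp, hpN, m, hm⟩ := hN n
  refine ⟨p, hnp, hpN, -m, ?_⟩
  calc |((-m : ℤ) : ℝ) * v.1 + p * v.2| = |v.1| * |p * (v.2 / v.1) - m| := by
        rw [← abs_mul]
        push_cast
        field_simp
        congr 1
        ring
    _ ≤ ε := (le_div_iff₀' hv).1 hm

/-- For a non-vertical unit vector `v ∈ S¹` and every `ε > 0`, the set of integers realized
as second coordinates of lattice points `p⃗ ∈ ℤ²` with `|⟨p⃗, v⟩| ≤ ε` has bounded gaps:
there is `N ∈ ℕ` such that every window `{n, …, n+N}` contains such a second coordinate. -/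
theorem lattice_points_near_line_bounded_gaps
    (v : ℝ × ℝ) (hunit : v.1 ^ 2 + v.2 ^ 2 = 1) (hv1 : v.1 ≠ 0) :
    ∀ ε : ℝ, 0 < ε → ∃ N : ℕ, ∀ n : ℤ, ∃ p : ℤ, n ≤ p ∧ p ≤ n + N ∧
      ∃ a : ℤ, |(a : ℝ) * v.1 + (p : ℝ) * v.2| ≤ ε :=
  lattice_points_near_line_bounded_gaps_general v hv1
end

section
/- Let α ∈ T^d and x ∈ T^d be arbitrary, and V ⊂ T^d a neighborhood of x. Then the visiting time set τ(x, V, T_α) := { n ∈ ℤ : x + nα ∈ V } has bounded gaps. -/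
/-- For every `α, x ∈ T^d` and every neighborhood `V` of `x`, the visiting time set
`τ(x, V, T_α) = { n ∈ ℤ : x + nα ∈ V }` of the translation `T_α` has bounded gaps. -/
theorem translation_visiting_times_bounded_gaps
    (d : ℕ) (α x : Fin d → AddCircle (1 : ℝ))
    (V : Set (Fin d → AddCircle (1 : ℝ))) (hV : V ∈ nhds x) :
    ∃ N : ℕ, ∀ n : ℤ, ∃ k : ℤ, n ≤ k ∧ k ≤ n + N ∧ x + k • α ∈ V := by
  classical
  have hcont : Continuous (fun w : Fin d → AddCircle (1 : ℝ) => x + w) :=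
    continuous_const.add continuous_id
  have hU : (fun w : Fin d → AddCircle (1 : ℝ) => x + w) ⁻¹' V ∈
      nhds (0 : Fin d → AddCircle (1 : ℝ)) := by
    apply hcont.continuousAt.preimage_mem_nhds
    simpa using hV
  set U := (fun w : Fin d → AddCircle (1 : ℝ) => x + w) ⁻¹' V with hUdef
  set W := interior U ∩ -interior U with hWdef
  have hWopen : IsOpen W := isOpen_interior.inter isOpen_interior.neg
  have hint0 : (0 : Fin d → AddCircle (1 : ℝ)) ∈ interior U := mem_interior_iff_mem_nhds.2 hU
  have hW0 : (0 : Fin d → AddCircle (1 : ℝ)) ∈ W := ⟨hint0, by simpa using hint0⟩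
  have hWsym : ∀ w ∈ W, -w ∈ W := fun w hw => ⟨by simpa using hw.2, by simpa using hw.1⟩
  have hWsub : W ⊆ U := fun w hw => interior_subset hw.1
  set G := closure (Set.range (fun n : ℤ => n • α)) with hGdef
  have hGc : IsCompact G := isClosed_closure.isCompact
  have hopen : ∀ n : ℤ, IsOpen ((fun w => n • α + w) '' W) := by
    intro n
    have := (Homeomorph.addLeft (n • α)).isOpenMap W hWopen
    simpa [Homeomorph.addLeft] using this
  have hcover : G ⊆ ⋃ n : ℤ, (fun w => n • α + w) '' W := by
    intro g hg
    have himg : IsOpen ((fun w => g + w) '' W) := by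
      have := (Homeomorph.addLeft g).isOpenMap W hWopen
      simpa [Homeomorph.addLeft] using this
    have hmem : g ∈ (fun w => g + w) '' W := ⟨0, hW0, add_zero g⟩
    obtain ⟨y, hy1, hy2⟩ := mem_closure_iff_nhds.1 hg _ (himg.mem_nhds hmem)
    obtain ⟨w, hwW, hwy⟩ := hy1
    obtain ⟨n, hn⟩ := hy2
    refine Set.mem_iUnion.2 ⟨n, -w, hWsym w hwW, ?_⟩
    have h1 : g + w = n • α := by
      have hwy' : g + w = y := hwy
      have hn' : n • α = y := hn
      rw [hwy', hn']
    have h2 : g = n • α - w := eq_sub_of_add_eq h1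
    rw [h2, sub_eq_add_neg]
  obtain ⟨t, ht⟩ := hGc.elim_finite_subcover _ hopen hcover
  have htne : t.Nonempty := by
    have h0 : (0 : Fin d → AddCircle (1 : ℝ)) ∈ G := subset_closure ⟨0, by simp⟩
    obtain ⟨i, hi, _⟩ := Set.mem_iUnion₂.1 (ht h0)
    exact ⟨i, hi⟩
  set M := t.max' htne with hMdef
  set m := t.min' htne with hmdef
  have hmM : m ≤ M := t.min'_le M (t.max'_mem htne)
  refine ⟨(M - m).toNat, fun n => ?_⟩
  have hg : ((n + M) • α) ∈ G := subset_closure ⟨n + M, rfl⟩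
  obtain ⟨i, hit, w, hwW, hweq⟩ := Set.mem_iUnion₂.1 (ht hg)
  have hweq' : i • α + w = (n + M) • α := hweq
  refine ⟨n + M - i, ?_, ?_, ?_⟩
  · have : i ≤ M := t.le_max' i hit
    omega
  · have h1 : m ≤ i := t.min'_le i hit
    have h2 : ((M - m).toNat : ℤ) = M - m := Int.toNat_of_nonneg (by omega)
    omega
  · have hw' : w = (n + M) • α - i • α := by
      rw [← hweq']; abel
    have hkα : (n + M - i) • α = w := by
      rw [hw', sub_zsmul, sub_eq_add_neg]
    rw [hkα]
    exact hWsub hwW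
end

section
/- Let f̃ : ℝ² → ℝ² be a lift of a torus homeomorphism f homotopic to the identity, and suppose the rotation set of f̃ lies in the line ℓ_α^v = { αv + t v^⊥ : t ∈ ℝ } for some v ∈ S¹ and α ∈ ℝ. If f is minimal, then the following are equivalent: (i) there is no uniform M > 0 with ⟨f̃ⁿ(z) - z, v⟩ - nα ≤ M for all z ∈ ℝ², n ∈ ℤ; (ii) the same with v replaced by -v (and α by -α); (iii) for every z ∈ T², sup_{n≥0} |⟨Δ^{(n)}(z), v⟩ - nα| = sup_{n≤0} |⟨Δ^{(n)}(z), v⟩ - nα| = ∞, where Δ^{(n)}(z) = f̃ⁿ(z̃) - z̃ for any lift z̃ of z. -/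
/-- The Euclidean inner product on `ℝ × ℝ`. -/
def ip (a b : ℝ × ℝ) : ℝ := a.1 * b.1 + a.2 * b.2

/-- The Misiurewicz–Ziemian rotation set of a map `F : ℝ² → ℝ²`. -/
def rotSet (F : ℝ × ℝ → ℝ × ℝ) : Set (ℝ × ℝ) :=
  ⋂ m : ℕ, closure {w | ∃ n : ℕ, m ≤ n ∧ ∃ z : ℝ × ℝ, w = (n : ℝ)⁻¹ • (F^[n] z - z)}

namespace DevAux

def ivec (p : ℤ × ℤ) : ℝ × ℝ := ((p.1 : ℝ), (p.2 : ℝ))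

lemma zIter_eq_pow (ft : (ℝ × ℝ) ≃ₜ (ℝ × ℝ)) (n : ℤ) :
    zIter ft n = ⇑(ft.toEquiv ^ n) := by
  funext z
  unfold zIter
  rcases le_or_gt 0 n with h | h
  · rw [if_pos h]
    obtain ⟨k, rfl⟩ : ∃ k : ℕ, n = (k : ℤ) := ⟨n.toNat, (Int.toNat_of_nonneg h).symm⟩
    rw [zpow_natCast, ← Equiv.Perm.iterate_eq_pow]
    simp
  · rw [if_neg (not_le.2 h)]
    obtain ⟨k, rfl⟩ : ∃ k : ℕ, n = -(k : ℤ) := ⟨(-n).toNat, by omega⟩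
    rw [zpow_neg, zpow_natCast, ← inv_pow, ← Equiv.Perm.iterate_eq_pow]
    simp

lemma zIter_continuous (ft : (ℝ × ℝ) ≃ₜ (ℝ × ℝ)) (n : ℤ) : Continuous (zIter ft n) := by
  unfold zIter
  rcases le_or_gt 0 n with h | h
  · simp only [if_pos h]; exact ft.continuous.iterate _
  · simp only [if_neg (not_le.2 h)]; exact ft.symm.continuous.iterate _

lemma zIter_add (ft : (ℝ × ℝ) ≃ₜ (ℝ × ℝ)) (m n : ℤ) (z : ℝ × ℝ) :
    zIter ft (m + n) z = zIter ft m (zIter ft n z) := by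
  simp only [zIter_eq_pow, zpow_add, Equiv.Perm.mul_apply]

lemma zIter_zero (ft : (ℝ × ℝ) ≃ₜ (ℝ × ℝ)) (z : ℝ × ℝ) : zIter ft 0 z = z := by
  simp [zIter]

lemma zIter_natCast (ft : (ℝ × ℝ) ≃ₜ (ℝ × ℝ)) (k : ℕ) (z : ℝ × ℝ) :
    zIter ft (k : ℤ) z = (⇑ft)^[k] z := by
  simp [zIter]

lemma zIter_symm (ft : (ℝ × ℝ) ≃ₜ (ℝ × ℝ)) (n : ℤ) :
    zIter ft.symm n = zIter ft (-n) := by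
  rw [zIter_eq_pow, zIter_eq_pow]
  have h : ft.symm.toEquiv = (ft.toEquiv)⁻¹ := rfl
  rw [h, inv_zpow, ← zpow_neg]


lemma iterate_per {h : ℝ × ℝ → ℝ × ℝ} (hh : ∀ z p, h (z + ivec p) = h z + ivec p)
    (k : ℕ) (z : ℝ × ℝ) (p : ℤ × ℤ) : h^[k] (z + ivec p) = h^[k] z + ivec p := by
  induction k generalizing z with
  | zero => simp
  | succ k ih => rw [Function.iterate_succ_apply, Function.iterate_succ_apply, hh, ih]

lemma symm_per (ft : (ℝ × ℝ) ≃ₜ (ℝ × ℝ))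
    (hper : ∀ z p, ft (z + ivec p) = ft z + ivec p) (z : ℝ × ℝ) (p : ℤ × ℤ) :
    ft.symm (z + ivec p) = ft.symm z + ivec p := by
  apply ft.injective
  rw [hper, ft.apply_symm_apply, ft.apply_symm_apply]

lemma zIter_per (ft : (ℝ × ℝ) ≃ₜ (ℝ × ℝ))
    (hper : ∀ z p, ft (z + ivec p) = ft z + ivec p) (n : ℤ) (z : ℝ × ℝ) (p : ℤ × ℤ) :
    zIter ft n (z + ivec p) = zIter ft n z + ivec p := by
  unfold zIter
  rcases le_or_gt 0 n with h | h
  · simp only [if_pos h]; exact iterate_per hper _ _ _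
  · simp only [if_neg (not_le.2 h)]; exact iterate_per (symm_per ft hper) _ _ _

/-- The deviation function. -/
def dev (ft : (ℝ × ℝ) ≃ₜ (ℝ × ℝ)) (v : ℝ × ℝ) (α : ℝ) (n : ℤ) (z : ℝ × ℝ) : ℝ :=
  ip (zIter ft n z - z) v - (n : ℝ) * α

lemma dev_zero (ft : (ℝ × ℝ) ≃ₜ (ℝ × ℝ)) (v : ℝ × ℝ) (α : ℝ) (z : ℝ × ℝ) :
    dev ft v α 0 z = 0 := by
  simp [dev, zIter_zero, ip]

lemma dev_cocycle (ft : (ℝ × ℝ) ≃ₜ (ℝ × ℝ)) (v : ℝ × ℝ) (α : ℝ) (m n : ℤ) (z : ℝ × ℝ) :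
    dev ft v α (m + n) z = dev ft v α m (zIter ft n z) + dev ft v α n z := by
  unfold dev
  rw [zIter_add]
  push_cast
  simp only [ip, Prod.fst_sub, Prod.snd_sub]
  ring

lemma dev_neg (ft : (ℝ × ℝ) ≃ₜ (ℝ × ℝ)) (v : ℝ × ℝ) (α : ℝ) (n : ℤ) (z : ℝ × ℝ) :
    dev ft v α (-n) (zIter ft n z) = - dev ft v α n z := by
  have h := dev_cocycle ft v α (-n) n z
  rw [neg_add_cancel, dev_zero] at h
  linarith

lemma dev_per (ft : (ℝ × ℝ) ≃ₜ (ℝ × ℝ))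
    (hper : ∀ z p, ft (z + ivec p) = ft z + ivec p) (v : ℝ × ℝ) (α : ℝ) (n : ℤ)
    (z : ℝ × ℝ) (p : ℤ × ℤ) : dev ft v α n (z + ivec p) = dev ft v α n z := by
  unfold dev
  rw [zIter_per ft hper]
  congr 2
  abel

lemma dev_continuous (ft : (ℝ × ℝ) ≃ₜ (ℝ × ℝ)) (v : ℝ × ℝ) (α : ℝ) (n : ℤ) :
    Continuous (dev ft v α n) := by
  unfold dev ip
  have h1 : Continuous fun z : ℝ × ℝ => zIter ft n z - z :=
    (zIter_continuous ft n).sub continuous_id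
  exact ((h1.fst.mul continuous_const).add (h1.snd.mul continuous_const)).sub continuous_const

lemma dev_symm (ft : (ℝ × ℝ) ≃ₜ (ℝ × ℝ)) (v : ℝ × ℝ) (α : ℝ) (n : ℤ) (z : ℝ × ℝ) :
    dev ft.symm v (-α) n z = dev ft v α (-n) z := by
  unfold dev
  rw [zIter_symm]
  push_cast
  ring

lemma proj_continuous : Continuous proj := by
  unfold proj
  exact Continuous.prodMk (continuous_quot_mk.comp continuous_fst)
    (continuous_quot_mk.comp continuous_snd)

lemma proj_isOpenMap : IsOpenMap proj := by
  have h : IsOpenMap ((↑) : ℝ → AddCircle (1 : ℝ)) := QuotientAddGroup.isOpenMap_coe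
  exact h.prodMap h

lemma coe_int_addCircle (k : ℤ) : ((k : ℝ) : AddCircle (1 : ℝ)) = 0 := by
  rw [AddCircle.coe_eq_zero_iff]
  exact ⟨k, by simp⟩

lemma proj_add_ivec (z : ℝ × ℝ) (p : ℤ × ℤ) : proj (z + ivec p) = proj z := by
  unfold proj ivec
  refine Prod.ext ?_ ?_ <;> simp only [Prod.fst_add, Prod.snd_add] <;>
    rw [AddCircle.coe_add, coe_int_addCircle, add_zero]

lemma proj_eq_iff {w z : ℝ × ℝ} (h : proj w = proj z) : ∃ p : ℤ × ℤ, w = z + ivec p := by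
  have h1 : (w.1 : AddCircle (1 : ℝ)) = z.1 := congrArg Prod.fst h
  have h2 : (w.2 : AddCircle (1 : ℝ)) = z.2 := congrArg Prod.snd h
  have e1 : ((w.1 - z.1 : ℝ) : AddCircle (1 : ℝ)) = 0 := by
    rw [AddCircle.coe_sub, h1, sub_self]
  have e2 : ((w.2 - z.2 : ℝ) : AddCircle (1 : ℝ)) = 0 := by
    rw [AddCircle.coe_sub, h2, sub_self]
  rw [AddCircle.coe_eq_zero_iff] at e1 e2
  obtain ⟨k1, hk1⟩ := e1
  obtain ⟨k2, hk2⟩ := e2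
  refine ⟨(k1, k2), ?_⟩
  have hk1' : w.1 = z.1 + (k1 : ℝ) := by simp at hk1; linarith
  have hk2' : w.2 = z.2 + (k2 : ℝ) := by simp at hk2; linarith
  exact Prod.ext hk1' hk2'


lemma lift_iterate (f : T2 ≃ₜ T2) (ft : (ℝ × ℝ) ≃ₜ (ℝ × ℝ))
    (hlift : ∀ z, proj (ft z) = f (proj z)) (k : ℕ) (z : ℝ × ℝ) :
    proj ((⇑ft)^[k] z) = (⇑f)^[k] (proj z) := by
  induction k with
  | zero => simp
  | succ k ih => rw [Function.iterate_succ_apply', Function.iterate_succ_apply', hlift, ih]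

lemma forward_orbit_dense (f : T2 ≃ₜ T2)
    (hmin : ∀ A : Set T2, IsClosed A → (⇑f) '' A = A → A = ∅ ∨ A = Set.univ) (x : T2) :
    closure {y : T2 | ∃ n : ℕ, y = (⇑f)^[n] x} = Set.univ := by
  haveI : Fact ((0 : ℝ) < 1) := ⟨one_pos⟩
  set C : ℕ → Set T2 := fun N => closure {y | ∃ n : ℕ, N ≤ n ∧ y = (⇑f)^[n] x} with hCdef
  have hmono : ∀ {M N : ℕ}, M ≤ N → C N ⊆ C M := by
    intro M N h
    exact closure_mono (fun y ⟨n, hn, e⟩ => ⟨n, le_trans h hn, e⟩)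
  have hne : ∀ N, (C N).Nonempty :=
    fun N => ⟨(⇑f)^[N] x, subset_closure ⟨N, le_refl N, rfl⟩⟩
  have hcl : ∀ N, IsClosed (C N) := fun N => isClosed_closure
  have hΩne : (⋂ N, C N).Nonempty := by
    apply IsCompact.nonempty_iInter_of_directed_nonempty_isCompact_isClosed C ?_ hne
      (fun N => (hcl N).isCompact) hcl
    intro i j
    exact ⟨max i j, hmono (le_max_left i j), hmono (le_max_right i j)⟩
  have himg : ∀ N, (⇑f) '' C N = C (N + 1) := by
    intro N
    have hset : (⇑f) '' {y | ∃ n : ℕ, N ≤ n ∧ y = (⇑f)^[n] x}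
        = {y | ∃ n : ℕ, N + 1 ≤ n ∧ y = (⇑f)^[n] x} := by
      ext y
      constructor
      · rintro ⟨u, ⟨n, hn, rfl⟩, rfl⟩
        exact ⟨n + 1, by omega, (Function.iterate_succ_apply' (⇑f) n x).symm⟩
      · rintro ⟨n, hn, rfl⟩
        refine ⟨(⇑f)^[n - 1] x, ⟨n - 1, by omega, rfl⟩, ?_⟩
        rw [← Function.iterate_succ_apply' (⇑f) (n - 1) x]
        congr 1
        omega
    rw [hCdef]
    simp only
    rw [f.image_closure, hset]
  have hfΩ : (⇑f) '' (⋂ N, C N) = ⋂ N, C N := by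
    rw [Set.image_iInter f.bijective]
    apply subset_antisymm
    · intro y hy
      rw [Set.mem_iInter] at hy ⊢
      intro N
      have := hy N
      rw [himg N] at this
      exact hmono (Nat.le_succ N) this
    · intro y hy
      rw [Set.mem_iInter] at hy ⊢
      intro N
      rw [himg N]
      exact hy (N + 1)
  rcases hmin _ (isClosed_iInter hcl) hfΩ with h | h
  · exact absurd h hΩne.ne_empty
  · apply Set.eq_univ_of_univ_subset
    calc Set.univ = ⋂ N, C N := h.symm
      _ ⊆ C 0 := Set.iInter_subset C 0
      _ ⊆ closure {y : T2 | ∃ n : ℕ, y = (⇑f)^[n] x} :=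
          closure_mono (fun y ⟨n, _, e⟩ => ⟨n, e⟩)

lemma global_bound (f : T2 ≃ₜ T2)
    (hmin : ∀ A : Set T2, IsClosed A → (⇑f) '' A = A → A = ∅ ∨ A = Set.univ)
    (ft : (ℝ × ℝ) ≃ₜ (ℝ × ℝ))
    (hlift : ∀ z, proj (ft z) = f (proj z))
    (hper : ∀ z p, ft (z + ivec p) = ft z + ivec p)
    (v : ℝ × ℝ) (α : ℝ) (z₀ : ℝ × ℝ) (K : ℝ)
    (hK : ∀ n : ℤ, 0 ≤ n → |dev ft v α n z₀| ≤ K) :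
    ∀ z : ℝ × ℝ, ∀ n : ℤ, |dev ft v α n z| ≤ 2 * K := by
  have key : ∀ m : ℤ, 0 ≤ m → ∀ w : ℝ × ℝ, |dev ft v α m w| ≤ 2 * K := by
    intro m hm w
    set S : Set (ℝ × ℝ) := {u | |dev ft v α m u| ≤ 2 * K} with hSdef
    have hS : IsClosed S := isClosed_le (dev_continuous ft v α m).abs continuous_const
    have horb : ∀ k : ℕ, ∀ p : ℤ × ℤ, ((⇑ft)^[k] z₀ + ivec p) ∈ S := by
      intro k p
      have h1 : (⇑ft)^[k] z₀ = zIter ft (k : ℤ) z₀ := (zIter_natCast ft k z₀).symm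
      have hco := dev_cocycle ft v α m (k : ℤ) z₀
      have hb1 := hK (m + k) (by omega)
      have hb2 := hK (k : ℤ) (by omega)
      show |dev ft v α m _| ≤ 2 * K
      rw [dev_per ft hper, h1]
      have : dev ft v α m (zIter ft (k : ℤ) z₀) = dev ft v α (m + k) z₀ - dev ft v α k z₀ := by
        linarith
      rw [this]
      calc |dev ft v α (m + (k : ℤ)) z₀ - dev ft v α (k : ℤ) z₀|
          ≤ |dev ft v α (m + (k : ℤ)) z₀| + |dev ft v α (k : ℤ) z₀| := abs_sub _ _
        _ ≤ 2 * K := by linarith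
    have hdense := forward_orbit_dense f hmin (proj z₀)
    have hwmem : proj w ∈ closure {y : T2 | ∃ n : ℕ, y = (⇑f)^[n] (proj z₀)} := by
      rw [hdense]; trivial
    have hsub : proj ⁻¹' {y : T2 | ∃ n : ℕ, y = (⇑f)^[n] (proj z₀)} ⊆ S := by
      rintro u ⟨n, hu⟩
      have heq : proj u = proj ((⇑ft)^[n] z₀) := by
        rw [lift_iterate f ft hlift]; exact hu
      obtain ⟨p, hp⟩ := proj_eq_iff heq
      rw [hp]
      exact horb n p
    have hw2 : w ∈ closure (proj ⁻¹' {y : T2 | ∃ n : ℕ, y = (⇑f)^[n] (proj z₀)}) :=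
      proj_isOpenMap.preimage_closure_subset_closure_preimage hwmem
    exact (hS.closure_subset_iff.mpr hsub) hw2
  intro z n
  rcases le_or_gt 0 n with h | h
  · exact key n h z
  · have hid := dev_neg ft v α n z
    have : |dev ft v α n z| = |dev ft v α (-n) (zIter ft n z)| := by
      rw [hid, abs_neg]
    rw [this]
    exact key (-n) (by omega) _

end DevAux

open DevAux

/-- For a minimal `f ∈ Homeo₀(T²)` with lift `ft` whose rotation set lies in the line
`ℓ_α^v`, the following are equivalent: (i) `f` does not exhibit uniformly bounded
`v`-deviations; (ii) the same with `v` replaced by `-v` (and `α` by `-α`); (iii) for every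
point, both the forward and backward deviations `|⟨Δ⁽ⁿ⁾(z), v⟩ - nα|` are unbounded. -/
theorem deviations_equivalences_for_minimal
    (f : T2 ≃ₜ T2)
    (hmin : ∀ A : Set T2, IsClosed A → (⇑f) '' A = A → A = ∅ ∨ A = Set.univ)
    (ft : (ℝ × ℝ) ≃ₜ (ℝ × ℝ))
    (hlift : ∀ z, proj (ft z) = f (proj z))
    (hper : ∀ z : ℝ × ℝ, ∀ p : ℤ × ℤ,
      ft (z + ((p.1 : ℝ), (p.2 : ℝ))) = ft z + ((p.1 : ℝ), (p.2 : ℝ)))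
    (v : ℝ × ℝ) (hv : v.1 ^ 2 + v.2 ^ 2 = 1) (α : ℝ)
    (hline : rotSet (⇑ft) ⊆ {w | ∃ t : ℝ, w = α • v + t • (-v.2, v.1)}) :
    ((¬ ∃ M : ℝ, 0 < M ∧ ∀ z : ℝ × ℝ, ∀ n : ℤ,
        ip (zIter ft n z - z) v - (n : ℝ) * α ≤ M) ↔
     (¬ ∃ M : ℝ, 0 < M ∧ ∀ z : ℝ × ℝ, ∀ n : ℤ,
        ip (zIter ft n z - z) (-v) - (n : ℝ) * (-α) ≤ M)) ∧
    ((¬ ∃ M : ℝ, 0 < M ∧ ∀ z : ℝ × ℝ, ∀ n : ℤ,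
        ip (zIter ft n z - z) v - (n : ℝ) * α ≤ M) ↔
     (∀ z : ℝ × ℝ,
        (∀ K : ℝ, ∃ n : ℤ, 0 ≤ n ∧ K < |ip (zIter ft n z - z) v - (n : ℝ) * α|) ∧
        (∀ K : ℝ, ∃ n : ℤ, n ≤ 0 ∧ K < |ip (zIter ft n z - z) v - (n : ℝ) * α|))) := by
  have hper' : ∀ z p, ft (z + ivec p) = ft z + ivec p := hper
  have hbody1 : ∀ (z : ℝ × ℝ) (n : ℤ),
      ip (zIter ft n z - z) v - (n : ℝ) * α = dev ft v α n z := fun _ _ => rfl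
  have hbody2 : ∀ (z : ℝ × ℝ) (n : ℤ),
      ip (zIter ft n z - z) (-v) - (n : ℝ) * (-α) = -(dev ft v α n z) := by
    intro z n
    simp only [dev, ip, Prod.fst_neg, Prod.snd_neg]
    ring
  have hflip : ∀ (n : ℤ) (z : ℝ × ℝ),
      dev ft v α (-n) (zIter ft n z) = - dev ft v α n z := fun n z => dev_neg ft v α n z
  -- bounded above implies bounded in absolute value
  have habs : ∀ M : ℝ, (∀ z (n : ℤ), dev ft v α n z ≤ M) →
      ∀ z (n : ℤ), |dev ft v α n z| ≤ M := by
    intro M hM z n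
    rw [abs_le]
    refine ⟨?_, hM z n⟩
    have h := hM (zIter ft n z) (-n)
    rw [hflip] at h
    linarith
  -- bounded above iff bounded below
  have hP' : (∃ M : ℝ, 0 < M ∧ ∀ z (n : ℤ), -(dev ft v α n z) ≤ M) ↔
      (∃ M : ℝ, 0 < M ∧ ∀ z (n : ℤ), dev ft v α n z ≤ M) := by
    constructor
    · rintro ⟨M, h0, hM⟩
      refine ⟨M, h0, fun z n => ?_⟩
      have h := hM (zIter ft n z) (-n)
      rw [hflip, neg_neg] at h
      exact h
    · rintro ⟨M, h0, hM⟩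
      refine ⟨M, h0, fun z n => ?_⟩
      have h := hM (zIter ft n z) (-n)
      rw [← hflip n z]
      exact h
  -- from a forward-bounded point, global bound
  have hfwd : ∀ (z : ℝ × ℝ) (K : ℝ), (∀ n : ℤ, 0 ≤ n → |dev ft v α n z| ≤ K) →
      ∃ M : ℝ, 0 < M ∧ ∀ w (n : ℤ), dev ft v α n w ≤ M := by
    intro z K hK
    have h0K : 0 ≤ K := by
      have h := hK 0 le_rfl
      rw [dev_zero, abs_zero] at h
      exact h
    have hg := global_bound f hmin ft hlift hper' v α z K hK
    refine ⟨2 * K + 1, by linarith, fun w n => ?_⟩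
    have := hg w n
    have := le_abs_self (dev ft v α n w)
    linarith
  -- from a backward-bounded point, global bound
  have hbwd : ∀ (z : ℝ × ℝ) (K : ℝ), (∀ n : ℤ, n ≤ 0 → |dev ft v α n z| ≤ K) →
      ∃ M : ℝ, 0 < M ∧ ∀ w (n : ℤ), dev ft v α n w ≤ M := by
    intro z K hK
    have hmin' : ∀ A : Set T2, IsClosed A → (⇑f.symm) '' A = A → A = ∅ ∨ A = Set.univ := by
      intro A hA h
      apply hmin A hA
      calc (⇑f) '' A = (⇑f) '' ((⇑f.symm) '' A) := by rw [h]
        _ = A := by rw [Set.image_image]; simp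
    have hlift' : ∀ w, proj (ft.symm w) = f.symm (proj w) := by
      intro w
      have h := hlift (ft.symm w)
      rw [ft.apply_symm_apply] at h
      rw [h, f.symm_apply_apply]
    have hper'' : ∀ w p, ft.symm (w + ivec p) = ft.symm w + ivec p := symm_per ft hper'
    have hK' : ∀ n : ℤ, 0 ≤ n → |dev ft.symm v (-α) n z| ≤ K := by
      intro n hn
      rw [dev_symm]
      exact hK (-n) (by omega)
    have h0K : 0 ≤ K := by
      have h := hK 0 le_rfl
      rw [dev_zero, abs_zero] at h
      exact h
    have hg := global_bound f.symm hmin' ft.symm hlift' hper'' v (-α) z K hK'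
    refine ⟨2 * K + 1, by linarith, fun w n => ?_⟩
    have h := hg w (-n)
    rw [dev_symm, neg_neg] at h
    have := le_abs_self (dev ft v α n w)
    linarith
  simp only [hbody1, hbody2]
  constructor
  · exact not_congr hP'.symm
  · constructor
    · intro hi z
      constructor
      · intro K
        by_contra hcon
        push_neg at hcon
        exact hi (hfwd z K fun n hn => (hcon n hn))
      · intro K
        by_contra hcon
        push_neg at hcon
        exact hi (hbwd z K fun n hn => (hcon n hn))
    · rintro hiii ⟨M, h0, hM⟩
      obtain ⟨n, hn, hlt⟩ := (hiii 0).1 M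
      exact absurd (habs M hM 0 n) (not_le.2 hlt)
end

section
/- Let f : T² → T² be a homeomorphism homotopic to the identity with a lift f̃ such that ρ(f̃) ⊂ ℓ_α^v for v ∈ S¹ of rational slope and α ∉ ℚ (appropriately normalized so that v is an integer direction scaled to unit length and α is the translation number), and suppose f exhibits uniformly bounded v-deviations and is minimal. Then f is a topological extension of an irrational circle rotation: there exists a continuous surjection h : T² → T¹ and β ∉ ℚ/ℤ with h ∘ f = R_β ∘ h, where R_β is the rotation by β. -/
/-!
The displacement cocycle `φ z = ⟨f̃ z - z, v⟩ - α` is `ℤ²`-periodic, so it is a function on `T²`,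
and bounded deviations say that its Birkhoff sums along an orbit are bounded. A minimal compact
invariant set of the skew product `(x, t) ↦ (f x, t + φ x)` is then the graph of a continuous `u`
with `u ∘ f = u + φ` (Gottschalk–Hedlund): vertical translates of an invariant set are invariant,
so minimality and compactness force the fibres to be points, and minimality of `f` makes the set
project onto `T²`. Hence `H z = ⟨z, v⟩ - u z` satisfies `H ∘ f̃ = H + α` and
`H (z + w) = H z + ⟨w, v⟩` for `w ∈ ℤ²`. As `v` has rational slope, `⟨ℤ², v⟩ = c⁻¹ ℤ` for some `c`,
and `c • H` descends to a surjection `h : T² → T¹` with `h ∘ f = h + c α`. Finally `c α` is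
irrational because a rotation factor of a minimal system is minimal.
-/

open Set Topology

section Minimal

variable {X : Type*} [TopologicalSpace X]

def IsMinimalHomeomorph (f : X ≃ₜ X) : Prop :=
  ∀ A : Set X, IsClosed A → (⇑f) '' A = A → A = ∅ ∨ A = univ

theorem IsMinimalHomeomorph.eq_univ {f : X ≃ₜ X} (hmin : IsMinimalHomeomorph f) {A : Set X}
    (hA : IsClosed A) (hinv : f ⁻¹' A = A) (hne : A.Nonempty) : A = univ := by
  have himage : (⇑f) '' A = A := by rw [← hinv, image_preimage_eq _ f.surjective, hinv]
  exact (hmin A hA himage).resolve_left hne.ne_empty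

theorem IsMinimalHomeomorph.irrational_of_semiconj {f : X ≃ₜ X} (hmin : IsMinimalHomeomorph f)
    {h : X → AddCircle (1 : ℝ)} (hc : Continuous h) (hs : Function.Surjective h) {β : ℝ}
    (hconj : ∀ x, h (f x) = h x + β) : Irrational β := by
  obtain ⟨x₀, -⟩ := hs 0
  set K := (AddSubgroup.zmultiples (β : AddCircle (1 : ℝ))).topologicalClosure
  have hβK : (β : AddCircle (1 : ℝ)) ∈ K :=
    AddSubgroup.le_topologicalClosure _ (AddSubgroup.mem_zmultiples _)
  have hA : {x | h x - h x₀ ∈ K} = univ := by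
    refine hmin.eq_univ ((AddSubgroup.isClosed_topologicalClosure _).preimage
      (hc.sub continuous_const)) ?_ ⟨x₀, by simp [K.zero_mem]⟩
    ext x
    simp only [mem_preimage, mem_ofPred_eq, hconj, add_sub_right_comm]
    exact K.add_mem_cancel_right hβK
  have hK : ∀ y, y ∈ K := fun y => by
    obtain ⟨x, hx⟩ := hs (y + h x₀)
    simpa [hx] using (Set.ext_iff.mp hA x).mpr trivial
  have hdense : DenseRange (· • (β : AddCircle (1 : ℝ)) : ℤ → AddCircle (1 : ℝ)) := by
    rw [DenseRange, dense_iff_closure_eq, eq_univ_iff_forall]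
    exact hK
  simpa using AddCircle.denseRange_zsmul_coe_iff.mp hdense

end Minimal

theorem IsCompact.exists_minimal_closed_invariant {Z : Type*} [TopologicalSpace Z] (T : Z → Z)
    {Y : Set Z} (hY : IsCompact Y) (hYc : IsClosed Y) (hne : Y.Nonempty) (hinv : T ⁻¹' Y = Y) :
    ∃ M ⊆ Y, Minimal (fun N : Set Z => N.Nonempty ∧ IsCompact N ∧ IsClosed N ∧ T ⁻¹' N = N) M := by
  refine zorn_superset_nonempty _ (fun c hcS hchain hcne => ?_) Y ⟨hne, hY, hYc, hinv⟩
  obtain ⟨N, hN⟩ := hcne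
  have : Nonempty c := ⟨⟨N, hN⟩⟩
  have hcl : IsClosed (⋂₀ c) := isClosed_sInter fun s hs => (hcS hs).2.2.1
  refine ⟨⋂₀ c, ⟨?_, (hcS hN).2.1.of_isClosed_subset hcl (sInter_subset_of_mem hN), hcl, ?_⟩,
    fun s hs => sInter_subset_of_mem hs⟩
  · have hdir : DirectedOn (· ⊇ ·) c := fun s hs t ht =>
      (hchain.total hs ht).elim (fun h => ⟨s, hs, subset_rfl, h⟩) (fun h => ⟨t, ht, h, subset_rfl⟩)
    exact IsCompact.nonempty_sInter_of_directed_nonempty_isCompact_isClosed hdir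
      (fun s hs => (hcS hs).1) (fun s hs => (hcS hs).2.1) (fun s hs => (hcS hs).2.2.1)
  · rw [preimage_sInter, sInter_eq_biInter]
    exact iInter₂_congr fun s hs => (hcS hs).2.2.2

theorem exists_continuous_of_isCompact_graph {X Y : Type*} [TopologicalSpace X] [T2Space X]
    [TopologicalSpace Y] {M : Set (X × Y)} (hM : IsCompact M) (hsurj : ∀ x, ∃ y, (x, y) ∈ M)
    (hinj : ∀ x y y', (x, y) ∈ M → (x, y') ∈ M → y = y') :
    ∃ u : X → Y, Continuous u ∧ ∀ x y, (x, y) ∈ M ↔ y = u x := by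
  have : CompactSpace M := isCompact_iff_compactSpace.mp hM
  have hbij : Function.Bijective fun p : M => p.1.1 := by
    refine ⟨fun p q hpq => Subtype.ext (Prod.ext hpq (hinj _ _ _ p.2 ?_)),
      fun x => ⟨⟨_, (hsurj x).choose_spec⟩, rfl⟩⟩
    simpa only [hpq] using q.2
  let E : M ≃ₜ X := (show Continuous (Equiv.ofBijective _ hbij) from
    continuous_fst.comp continuous_subtype_val).homeoOfEquivCompactToT2
  have hmem : ∀ x, (x, (E.symm x).1.2) ∈ M := fun x => by
    convert (E.symm x).2
    exact (E.apply_symm_apply x).symm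
  exact ⟨fun x => (E.symm x).1.2, by fun_prop, fun x y =>
    ⟨fun hy => hinj _ _ _ hy (hmem x), fun hy => hy ▸ hmem x⟩⟩

section SkewProduct

variable {X : Type*} [TopologicalSpace X]

@[simps]
def skewProduct (f : X ≃ₜ X) (φ : C(X, ℝ)) : X × ℝ ≃ₜ X × ℝ where
  toFun p := (f p.1, p.2 + φ p.1)
  invFun p := (f.symm p.1, p.2 - φ (f.symm p.1))
  left_inv p := by simp
  right_inv p := by simp
  continuous_toFun := by fun_prop
  continuous_invFun := by fun_prop

theorem eq_zero_of_mapsTo_add_snd {M : Set (X × ℝ)} (hM : IsCompact M) (hne : M.Nonempty)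
    {s : ℝ} (hs : ∀ p ∈ M, (p.1, p.2 + s) ∈ M) : s = 0 := by
  obtain ⟨p, hp, hmax⟩ := hM.exists_isMaxOn hne continuous_snd.continuousOn
  obtain ⟨q, hq, hmin⟩ := hM.exists_isMinOn hne continuous_snd.continuousOn
  have h₁ : p.2 + s ≤ p.2 := hmax (hs p hp)
  have h₂ : q.2 ≤ q.2 + s := hmin (hs q hq)
  linarith

variable {f : X ≃ₜ X} {φ : C(X, ℝ)}

theorem eq_of_mem_of_minimal_invariant {M : Set (X × ℝ)}
    (hM : Minimal (fun N => N.Nonempty ∧ IsCompact N ∧ IsClosed N ∧ skewProduct f φ ⁻¹' N = N) M)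
    {x : X} {t t' : ℝ} (ht : (x, t) ∈ M) (ht' : (x, t') ∈ M) : t = t' := by
  obtain ⟨hne, hcpt, hcl, hinv⟩ := hM.prop
  -- the vertical translation by `t' - t` commutes with the skew product
  set W := M ∩ (fun p : X × ℝ => (p.1, p.2 + (t' - t))) ⁻¹' M
  have hWinv : skewProduct f φ ⁻¹' W = W := by
    ext p
    have hp := Set.ext_iff.mp hinv p
    have hps := Set.ext_iff.mp hinv (p.1, p.2 + (t' - t))
    simp only [W, mem_inter_iff, mem_preimage, skewProduct_apply] at hp hps ⊢
    rw [hp, ← hps, add_right_comm]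
  have hWcl : IsClosed W := hcl.inter (hcl.preimage (by fun_prop))
  have hWM : W = M := hM.eq_of_subset ⟨⟨(x, t), ht, by simpa using ht'⟩,
    hcpt.of_isClosed_subset hWcl inter_subset_left, hWcl, hWinv⟩ inter_subset_left
  have hshift : ∀ p ∈ M, (p.1, p.2 + (t' - t)) ∈ M := fun p hp => (hWM.symm ▸ hp : p ∈ W).2
  linarith [eq_zero_of_mapsTo_add_snd hcpt hne hshift]

theorem IsMinimalHomeomorph.exists_coboundary_of_invariant [T2Space X]
    (hmin : IsMinimalHomeomorph f) {Y : Set (X × ℝ)} (hY : IsCompact Y) (hYc : IsClosed Y)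
    (hne : Y.Nonempty) (hinv : skewProduct f φ ⁻¹' Y = Y) :
    ∃ u : X → ℝ, Continuous u ∧ ∀ x, u (f x) = u x + φ x := by
  obtain ⟨M, -, hM⟩ := hY.exists_minimal_closed_invariant _ hYc hne hinv
  obtain ⟨hMne, hMcpt, -, hMinv⟩ := hM.prop
  have hmemM : ∀ p, skewProduct f φ p ∈ M ↔ p ∈ M := Set.ext_iff.mp hMinv
  have hfst : Prod.fst '' M = univ := by
    refine hmin.eq_univ (hMcpt.image continuous_fst).isClosed ?_ (hMne.image _)
    ext x
    constructor
    · rintro ⟨p, hp, hpx⟩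
      refine ⟨(skewProduct f φ).symm p, ?_, ?_⟩
      · rwa [← hmemM, Homeomorph.apply_symm_apply]
      · simp [hpx]
    · rintro ⟨p, hp, rfl⟩
      exact ⟨_, (hmemM p).mpr hp, rfl⟩
  obtain ⟨u, hu, hgraph⟩ := exists_continuous_of_isCompact_graph hMcpt
    (fun x => by obtain ⟨p, hp, rfl⟩ := hfst.symm ▸ mem_univ x; exact ⟨p.2, hp⟩)
    (fun x t t' => eq_of_mem_of_minimal_invariant hM)
  refine ⟨u, hu, fun x => ?_⟩
  have hx : (x, u x) ∈ M := (hgraph x _).mpr rfl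
  exact ((hgraph _ _).mp ((hmemM _).mpr hx)).symm

theorem IsMinimalHomeomorph.exists_coboundary_of_bounded_orbit [CompactSpace X] [T2Space X]
    (hmin : IsMinimalHomeomorph f) (o : ℤ → X × ℝ) (ho : ∀ n, skewProduct f φ (o n) = o (n + 1))
    (C : ℝ) (hC : ∀ n, |(o n).2| ≤ C) :
    ∃ u : X → ℝ, Continuous u ∧ ∀ x, u (f x) = u x + φ x := by
  have hrange : skewProduct f φ ⁻¹' range o = range o := by
    ext p
    constructor
    · rintro ⟨n, hn⟩
      exact ⟨n - 1, (skewProduct f φ).injective (by rw [ho, sub_add_cancel, hn])⟩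
    · rintro ⟨n, rfl⟩
      exact ⟨n + 1, (ho n).symm⟩
  have hsub : closure (range o) ⊆ univ ×ˢ Icc (-C) C :=
    closure_minimal (range_subset_iff.2 fun n => ⟨trivial, abs_le.mp (hC n)⟩)
      (isClosed_univ.prod isClosed_Icc)
  exact hmin.exists_coboundary_of_invariant
    ((isCompact_univ.prod isCompact_Icc).of_isClosed_subset isClosed_closure hsub)
    isClosed_closure (range_nonempty o).closure
    (by rw [Homeomorph.preimage_closure, hrange])

end SkewProduct

theorem AddCircle.surjective_coe_comp {X : Type*} [TopologicalSpace X] [PreconnectedSpace X]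
    {G : X → ℝ} (hG : Continuous G) {a b : X} (hab : G b = G a + 1) :
    Function.Surjective fun x => (G x : AddCircle (1 : ℝ)) := by
  intro y
  obtain ⟨r, hr, rfl⟩ : y ∈ ((↑) : ℝ → AddCircle (1 : ℝ)) '' Ico (G a) (G a + 1) := by
    rw [AddCircle.coe_image_Ico_eq]
    trivial
  obtain ⟨x, hx⟩ := intermediate_value_univ a b hG ⟨hr.1, hab ▸ hr.2.le⟩
  exact ⟨x, congrArg _ hx⟩

theorem continuous_proj : Continuous proj := by
  unfold proj
  fun_prop

theorem isQuotientMap_proj : IsQuotientMap proj := by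
  have hopen : IsOpenMap proj :=
    (QuotientAddGroup.isOpenMap_coe : IsOpenMap ((↑) : ℝ → AddCircle (1 : ℝ))).prodMap
      QuotientAddGroup.isOpenMap_coe
  exact hopen.isQuotientMap continuous_proj
    (Function.Surjective.prodMap QuotientAddGroup.mk_surjective QuotientAddGroup.mk_surjective)

theorem proj_add_intVec (z : ℝ × ℝ) (p : ℤ × ℤ) : proj (z + ((p.1 : ℝ), (p.2 : ℝ))) = proj z := by
  simp [proj]

theorem exists_eq_add_intVec_of_proj_eq {z w : ℝ × ℝ} (h : proj z = proj w) :
    ∃ p : ℤ × ℤ, w = z + ((p.1 : ℝ), (p.2 : ℝ)) := by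
  obtain ⟨h₁, h₂⟩ := Prod.ext_iff.mp h
  obtain ⟨m, hm⟩ := AddSubgroup.mem_zmultiples_iff.mp (QuotientAddGroup.eq.mp h₁)
  obtain ⟨n, hn⟩ := AddSubgroup.mem_zmultiples_iff.mp (QuotientAddGroup.eq.mp h₂)
  refine ⟨(m, n), Prod.ext ?_ ?_⟩ <;> simp only [zsmul_eq_mul, mul_one] at hm hn <;>
    simp <;> linarith

theorem exists_continuous_comp_proj_eq {E : Type*} [TopologicalSpace E] {g : ℝ × ℝ → E}
    (hg : Continuous g) (hper : ∀ z (p : ℤ × ℤ), g (z + ((p.1 : ℝ), (p.2 : ℝ))) = g z) :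
    ∃ G : T2 → E, Continuous G ∧ ∀ z, G (proj z) = g z := by
  have hfac : Function.FactorsThrough g proj := fun z w h => by
    obtain ⟨p, rfl⟩ := exists_eq_add_intVec_of_proj_eq h
    exact (hper z p).symm
  have hq : IsQuotientMap (⟨proj, continuous_proj⟩ : C(ℝ × ℝ, T2)) := isQuotientMap_proj
  exact ⟨hq.lift ⟨g, hg⟩ hfac, (hq.lift _ hfac).continuous,
    fun z => DFunLike.congr_fun (hq.lift_comp ⟨g, hg⟩ hfac) z⟩

theorem zIter_succ {X : Type*} [TopologicalSpace X] (f : X ≃ₜ X) (n : ℤ) (z : X) :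
    zIter f (n + 1) z = f (zIter f n z) := by
  unfold zIter
  rcases le_or_gt 0 n with hn | hn
  · rw [if_pos hn, if_pos (by omega), show (n + 1).toNat = n.toNat + 1 by omega,
      Function.iterate_succ_apply']
  · rcases (by omega : n = -1 ∨ n < -1) with rfl | hn'
    · simp
    · rw [if_neg (by omega), if_neg (by omega), show (-n).toNat = (-(n + 1)).toNat + 1 by omega,
        Function.iterate_succ_apply', Homeomorph.apply_symm_apply]

theorem exists_mul_ip_intVec_eq_one {v : ℝ × ℝ} (hv : v ≠ 0) {p q : ℤ} (hpq : (p, q) ≠ (0, 0))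
    (horth : (p : ℝ) * v.1 + q * v.2 = 0) :
    ∃ c : ℝ, (∀ w : ℤ × ℤ, ∃ k : ℤ, c * ip ((w.1 : ℝ), (w.2 : ℝ)) v = k) ∧
      ∃ w : ℤ × ℤ, c * ip ((w.1 : ℝ), (w.2 : ℝ)) v = 1 := by
  have hpq' : (p : ℝ) ^ 2 + q ^ 2 ≠ 0 := by
    contrapose! hpq
    have hp : (p : ℝ) = 0 := by nlinarith [sq_nonneg (p : ℝ), sq_nonneg (q : ℝ)]
    have hq : (q : ℝ) = 0 := by nlinarith [sq_nonneg (p : ℝ), sq_nonneg (q : ℝ)]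
    simp_all
  -- `v` is the multiple `t • (-q, p)` of the primitive direction orthogonal to `(p, q)`
  set t := (p * v.2 - q * v.1) / ((p : ℝ) ^ 2 + q ^ 2)
  have hv₁ : v.1 = -q * t := by
    simp only [t]
    field_simp
    linear_combination (p : ℝ) * horth
  have hv₂ : v.2 = p * t := by
    simp only [t]
    field_simp
    linear_combination (q : ℝ) * horth
  have ht : t ≠ 0 := fun ht => hv (Prod.ext (by simp [hv₁, ht]) (by simp [hv₂, ht]))
  have hip (w : ℤ × ℤ) : ip ((w.1 : ℝ), (w.2 : ℝ)) v = t * ((p * w.2 - q * w.1 : ℤ) : ℝ) := by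
    simp only [ip, hv₁, hv₂]
    push_cast
    ring
  have hg : (Int.gcd p q : ℝ) ≠ 0 := by
    have : 0 < Int.gcd p q := Int.gcd_pos_iff.mpr (by contrapose! hpq; simp [hpq])
    positivity
  refine ⟨1 / (t * Int.gcd p q), fun w => ?_, ⟨(-Int.gcdB p q, Int.gcdA p q), ?_⟩⟩
  · obtain ⟨k, hk⟩ : (Int.gcd p q : ℤ) ∣ p * w.2 - q * w.1 :=
      dvd_sub ((Int.gcd_dvd_left p q).mul_right _) ((Int.gcd_dvd_right p q).mul_right _)
    refine ⟨k, ?_⟩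
    rw [hip, hk]
    push_cast
    field_simp
  · rw [hip, show p * Int.gcdA p q - q * -Int.gcdB p q = Int.gcd p q by
      rw [Int.gcd_eq_gcd_ab]; ring]
    push_cast
    field_simp

section Lift

variable {f : T2 ≃ₜ T2} {ft : (ℝ × ℝ) ≃ₜ (ℝ × ℝ)}

theorem exists_lift_semiconj_of_bounded_deviation (hmin : IsMinimalHomeomorph f)
    (hlift : ∀ z, proj (ft z) = f (proj z))
    (hper : ∀ z (p : ℤ × ℤ), ft (z + ((p.1 : ℝ), (p.2 : ℝ))) = ft z + ((p.1 : ℝ), (p.2 : ℝ)))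
    (v : ℝ × ℝ) (α : ℝ) (z₀ : ℝ × ℝ) (M : ℝ)
    (hM : ∀ n : ℤ, |ip (zIter ft n z₀ - z₀) v - n * α| ≤ M) :
    ∃ H : ℝ × ℝ → ℝ, Continuous H ∧
      (∀ z (p : ℤ × ℤ), H (z + ((p.1 : ℝ), (p.2 : ℝ))) = H z + ip ((p.1 : ℝ), (p.2 : ℝ)) v) ∧
      ∀ z, H (ft z) = H z + α := by
  obtain ⟨φ, hφc, hφ⟩ := exists_continuous_comp_proj_eq (g := fun z => ip (ft z - z) v - α)
    (by unfold ip; fun_prop) (fun z p => by simp [hper])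
  set orbit : ℤ → T2 × ℝ := fun n => (proj (zIter ft n z₀), ip (zIter ft n z₀ - z₀) v - n * α)
  have horbit (n : ℤ) : skewProduct f ⟨φ, hφc⟩ (orbit n) = orbit (n + 1) := by
    refine Prod.ext (by simp [orbit, zIter_succ, hlift]) ?_
    simp only [orbit, skewProduct_apply, ContinuousMap.coe_mk, hφ, zIter_succ, ip,
      Prod.fst_sub, Prod.snd_sub]
    push_cast
    ring
  obtain ⟨u, hu, hcob⟩ := hmin.exists_coboundary_of_bounded_orbit orbit horbit M hM
  refine ⟨fun z => ip z v - u (proj z), ?_, fun z p => ?_, fun z => ?_⟩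
  · have := continuous_proj
    unfold ip
    fun_prop
  · simp only [proj_add_intVec, ip, Prod.fst_add, Prod.snd_add]
    ring
  · simp only [hlift, hcob, ContinuousMap.coe_mk, hφ, ip, Prod.fst_sub, Prod.snd_sub]
    ring

theorem exists_circle_factor_of_lift_semiconj (hlift : ∀ z, proj (ft z) = f (proj z))
    {v : ℝ × ℝ} {c α : ℝ} (hint : ∀ w : ℤ × ℤ, ∃ k : ℤ, c * ip ((w.1 : ℝ), (w.2 : ℝ)) v = k)
    (hone : ∃ w : ℤ × ℤ, c * ip ((w.1 : ℝ), (w.2 : ℝ)) v = 1) {H : ℝ × ℝ → ℝ} (hH : Continuous H)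
    (hHper : ∀ z (p : ℤ × ℤ), H (z + ((p.1 : ℝ), (p.2 : ℝ))) = H z + ip ((p.1 : ℝ), (p.2 : ℝ)) v)
    (hHft : ∀ z, H (ft z) = H z + α) :
    ∃ h : T2 → AddCircle (1 : ℝ), Continuous h ∧ Function.Surjective h ∧
      ∀ x, h (f x) = h x + ((c * α : ℝ) : AddCircle (1 : ℝ)) := by
  obtain ⟨h, hc, hh⟩ := exists_continuous_comp_proj_eq
    (g := fun z => ((c * H z : ℝ) : AddCircle (1 : ℝ))) (by fun_prop) (fun z p => by
      obtain ⟨k, hk⟩ := hint p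
      simp [hHper, mul_add, hk])
  refine ⟨h, hc, ?_, fun x => ?_⟩
  · obtain ⟨w, hw⟩ := hone
    have hsurj := AddCircle.surjective_coe_comp (hH.const_mul c) (a := 0) (b := ((w.1 : ℝ), w.2))
      (by simpa [mul_add, hw] using congrArg (c * ·) (hHper 0 w))
    exact fun y => let ⟨z, hz⟩ := hsurj y; ⟨proj z, (hh z).trans hz⟩
  · obtain ⟨z, rfl⟩ := isQuotientMap_proj.surjective x
    rw [← hlift, hh, hh, hHft, mul_add, AddCircle.coe_add]

end Lift

theorem bounded_deviations_give_circle_rotation_factor_general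
    (f : T2 ≃ₜ T2)
    (hmin : ∀ A : Set T2, IsClosed A → (⇑f) '' A = A → A = ∅ ∨ A = Set.univ)
    (ft : (ℝ × ℝ) ≃ₜ (ℝ × ℝ))
    (hlift : ∀ z, proj (ft z) = f (proj z))
    (hper : ∀ z : ℝ × ℝ, ∀ p : ℤ × ℤ,
      ft (z + ((p.1 : ℝ), (p.2 : ℝ))) = ft z + ((p.1 : ℝ), (p.2 : ℝ)))
    (v : ℝ × ℝ) (hv : v.1 ^ 2 + v.2 ^ 2 = 1)
    (hrat : ∃ p q : ℤ, (p, q) ≠ (0, 0) ∧ (p : ℝ) * v.1 + (q : ℝ) * v.2 = 0)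
    (α : ℝ)
    (hbdd : ∃ M : ℝ, 0 < M ∧ ∀ z : ℝ × ℝ, ∀ n : ℤ,
      |ip (zIter ft n z - z) v - (n : ℝ) * α| ≤ M) :
    ∃ h : T2 → AddCircle (1 : ℝ), Continuous h ∧ Function.Surjective h ∧
      ∃ β : ℝ, Irrational β ∧ ∀ x : T2, h (f x) = h x + (β : AddCircle (1 : ℝ)) := by
  obtain ⟨M, -, hM⟩ := hbdd
  obtain ⟨p, q, hpq, horth⟩ := hrat
  have hv₀ : v ≠ 0 := by
    rintro rfl
    norm_num at hv
  obtain ⟨c, hint, hone⟩ := exists_mul_ip_intVec_eq_one hv₀ hpq horth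
  obtain ⟨H, hH, hHper, hHft⟩ :=
    exists_lift_semiconj_of_bounded_deviation hmin hlift hper v α 0 M (hM 0)
  obtain ⟨h, hc, hs, hconj⟩ := exists_circle_factor_of_lift_semiconj hlift hint hone hH hHper hHft
  exact ⟨h, hc, hs, c * α, IsMinimalHomeomorph.irrational_of_semiconj hmin hc hs hconj, hconj⟩

/-- A minimal `f ∈ Homeo₀(T²)` whose rotation set lies on a rational-slope line
`ℓ_α^v` with `α` irrational, and which has uniformly bounded `v`-deviations, is a
topological extension of an irrational circle rotation: there are a continuous surjection
`h : T² → T¹` and an irrational `β` with `h ∘ f = R_β ∘ h`. -/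
theorem bounded_deviations_give_circle_rotation_factor
    (f : T2 ≃ₜ T2)
    (hmin : ∀ A : Set T2, IsClosed A → (⇑f) '' A = A → A = ∅ ∨ A = Set.univ)
    (ft : (ℝ × ℝ) ≃ₜ (ℝ × ℝ))
    (hlift : ∀ z, proj (ft z) = f (proj z))
    (hper : ∀ z : ℝ × ℝ, ∀ p : ℤ × ℤ,
      ft (z + ((p.1 : ℝ), (p.2 : ℝ))) = ft z + ((p.1 : ℝ), (p.2 : ℝ)))
    (v : ℝ × ℝ) (hv : v.1 ^ 2 + v.2 ^ 2 = 1)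
    (hrat : ∃ p q : ℤ, (p, q) ≠ (0, 0) ∧ (p : ℝ) * v.1 + (q : ℝ) * v.2 = 0)
    (α : ℝ) (hα : Irrational α)
    (hline : rotSet (⇑ft) ⊆ {w | ∃ t : ℝ, w = α • v + t • (-v.2, v.1)})
    (hbdd : ∃ M : ℝ, 0 < M ∧ ∀ z : ℝ × ℝ, ∀ n : ℤ,
      |ip (zIter ft n z - z) v - (n : ℝ) * α| ≤ M) :
    ∃ h : T2 → AddCircle (1 : ℝ), Continuous h ∧ Function.Surjective h ∧
      ∃ β : ℝ, Irrational β ∧ ∀ x : T2, h (f x) = h x + (β : AddCircle (1 : ℝ)) :=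
  bounded_deviations_give_circle_rotation_factor_general f hmin ft hlift hper v hv hrat α hbdd
end

section
/- Let F be a plane pseudo-foliation, i.e., a partition of ℝ² each of whose atoms is closed, connected, has empty interior, and whose complement has exactly two connected components. Then for every z ∈ ℝ², both connected components of ℝ² \ F_z are unbounded, where F_z denotes the atom containing z. -/
open Bornology

/-- A plane pseudo-foliation: a partition of `ℝ²` each of whose atoms is closed, connected,
has empty interior, and whose complement has exactly two connected components. -/
structure PlanePseudoFoliation (P : Set (Set (ℝ × ℝ))) : Prop where
  covers : ∀ z : ℝ × ℝ, ∃ A ∈ P, z ∈ A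
  disjoint : ∀ A ∈ P, ∀ B ∈ P, (A ∩ B).Nonempty → A = B
  closed : ∀ A ∈ P, IsClosed A
  connected : ∀ A ∈ P, IsConnected A
  empty_interior : ∀ A ∈ P, interior A = ∅
  two_components : ∀ A ∈ P, ∃ U V : Set (ℝ × ℝ), U ≠ V ∧
    {C : Set (ℝ × ℝ) | ∃ w ∈ Aᶜ, C = connectedComponentIn Aᶜ w} = {U, V}

namespace PFhelper

open Metric Set

lemma unbounded_univ : ¬ IsBounded (univ : Set (ℝ × ℝ)) := NormedSpace.unbounded_univ ℝ (ℝ × ℝ)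

lemma unbounded_compl {U : Set (ℝ × ℝ)} (hU : IsBounded U) : ¬ IsBounded Uᶜ := fun h => by
  have := hU.union h
  rw [union_compl_self] at this
  exact unbounded_univ this

/-- closure of a connected component of an open set stays in the component inside the set -/
lemma closure_componentIn {S : Set (ℝ × ℝ)} (hS : IsOpen S) (x : ℝ × ℝ) :
    closure (connectedComponentIn S x) ∩ S ⊆ connectedComponentIn S x := by
  rintro y ⟨hyc, hyS⟩
  have hD : IsOpen (connectedComponentIn S y) := hS.connectedComponentIn
  have hne : (connectedComponentIn S y ∩ connectedComponentIn S x).Nonempty :=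
    mem_closure_iff.mp hyc _ hD (mem_connectedComponentIn hyS)
  obtain ⟨t, htD, htC⟩ := hne
  rw [connectedComponentIn_eq htC, ← connectedComponentIn_eq htD]
  exact mem_connectedComponentIn hyS

lemma rank_two : 1 < Module.rank ℝ (ℝ × ℝ) := by
  have : Module.rank ℝ (ℝ × ℝ) = 2 := by rw [rank_prod']; simp; norm_num
  rw [this]; norm_num

lemma isConnected_compl_closedBall (c : ℝ × ℝ) {r : ℝ} (hr : 0 ≤ r) :
    IsConnected ((closedBall c r)ᶜ : Set (ℝ × ℝ)) := by
  have key : ((closedBall c r)ᶜ : Set (ℝ × ℝ)) =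
      (fun p : (ℝ × ℝ) × ℝ => c + p.2 • p.1) '' ((sphere (0:ℝ × ℝ) 1) ×ˢ (Ioi r)) := by
    ext y
    simp only [mem_image, mem_prod, mem_sphere, mem_Ioi, mem_compl_iff, mem_closedBall,
      not_le, dist_eq_norm]
    constructor
    · intro hy
      have hpos : 0 < ‖y - c‖ := lt_of_le_of_lt hr hy
      refine ⟨⟨‖y - c‖⁻¹ • (y - c), ‖y - c‖⟩, ⟨?_, hy⟩, ?_⟩
      · simp [norm_smul, abs_of_pos (inv_pos.mpr hpos), inv_mul_cancel₀ hpos.ne']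
      · simp only
        rw [smul_smul, mul_inv_cancel₀ hpos.ne', one_smul]
        abel
    · rintro ⟨⟨v, t⟩, ⟨hv, ht⟩, rfl⟩
      simp only [add_sub_cancel_left, norm_smul]
      simp only [sub_zero] at hv
      rw [hv, mul_one, Real.norm_eq_abs, abs_of_pos (lt_of_le_of_lt hr ht)]
      exact ht
  rw [key]
  apply IsConnected.image
  · exact ((isConnected_sphere rank_two 0 zero_le_one).prod
      ⟨⟨r+1, by simp⟩, isPreconnected_Ioi⟩)
  · fun_prop

variable {P : Set (Set (ℝ × ℝ))}

/-- every bounded atom has a unique bounded complementary component, disjoint from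
all unbounded connected sets avoiding the atom -/
lemma pocket (hP : PlanePseudoFoliation P) {B : Set (ℝ × ℝ)} (hB : B ∈ P) (hBb : IsBounded B) :
    ∃ W : Set (ℝ × ℝ), (∃ w ∈ Bᶜ, W = connectedComponentIn Bᶜ w) ∧ IsBounded W ∧
      ∀ T : Set (ℝ × ℝ), IsPreconnected T → ¬ IsBounded T → T ∩ B = ∅ → T ∩ W = ∅ := by
  obtain ⟨U, V, hUV, hset⟩ := hP.two_components B hB
  obtain ⟨r, hr⟩ := hBb.subset_closedBall (0 : ℝ × ℝ)
  set R := max r 0 with hR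
  have hBR : B ⊆ closedBall 0 R := hr.trans (closedBall_subset_closedBall (le_max_left _ _))
  set K := ((closedBall (0:ℝ × ℝ) R)ᶜ : Set (ℝ × ℝ)) with hK
  have hKconn : IsConnected K := isConnected_compl_closedBall 0 (le_max_right _ _)
  obtain ⟨k, hk⟩ := hKconn.nonempty
  have hKB : K ⊆ Bᶜ := compl_subset_compl.mpr hBR
  set W₁ := connectedComponentIn Bᶜ k with hW₁
  have hKW₁ : K ⊆ W₁ := hKconn.isPreconnected.subset_connectedComponentIn hk hKB
  have hW₁mem : W₁ ∈ ({U, V} : Set (Set (ℝ × ℝ))) := by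
    rw [← hset]; exact ⟨k, hKB hk, rfl⟩
  have hUmem : U ∈ {C : Set (ℝ × ℝ) | ∃ w ∈ Bᶜ, C = connectedComponentIn Bᶜ w} := by
    rw [hset]; left; rfl
  have hVmem : V ∈ {C : Set (ℝ × ℝ) | ∃ w ∈ Bᶜ, C = connectedComponentIn Bᶜ w} := by
    rw [hset]; right; rfl
  simp only [Set.mem_insert_iff, Set.mem_singleton_iff] at hW₁mem
  obtain ⟨W₂, hW₂mem, hW₂ne⟩ :
      ∃ W₂, (∃ w ∈ Bᶜ, W₂ = connectedComponentIn Bᶜ w) ∧ W₂ ≠ W₁ := by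
    rcases hW₁mem with h | h
    · exact ⟨V, hVmem, fun hc => hUV ((hc.trans h).symm)⟩
    · exact ⟨U, hUmem, fun hc => hUV (hc.trans h)⟩
  obtain ⟨w₂, hw₂B, hw₂⟩ := hW₂mem
  have hdisj : W₁ ∩ W₂ = ∅ := by
    by_contra h
    obtain ⟨s, hs1, hs2⟩ := Set.nonempty_iff_ne_empty.mpr h
    rw [hw₂] at hs2
    rw [hW₁] at hs1
    exact hW₂ne (by rw [hw₂, connectedComponentIn_eq hs2, hW₁, connectedComponentIn_eq hs1])
  have huniv : ∀ T : Set (ℝ × ℝ), IsPreconnected T → ¬ IsBounded T → T ∩ B = ∅ → T ∩ W₂ = ∅ := by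
    intro T hTc hTu hTB
    have hTBc : T ⊆ Bᶜ := fun t ht hb => by
      have : t ∈ T ∩ B := ⟨ht, hb⟩
      rw [hTB] at this; exact this
    obtain ⟨t, ht, htK⟩ : ∃ t ∈ T, t ∈ K := by
      by_contra h
      push_neg at h
      exact hTu ((isBounded_closedBall (x := (0:ℝ × ℝ)) (r := R)).subset
        (fun t ht => not_not.mp (fun hc => h t ht hc)))
    have hTW₁ : T ⊆ W₁ := by
      have h1 : T ⊆ connectedComponentIn Bᶜ t := hTc.subset_connectedComponentIn ht hTBc
      rwa [← connectedComponentIn_eq (hKW₁ htK)] at h1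
    rw [Set.eq_empty_iff_forall_notMem]
    rintro s ⟨hsT, hsW₂⟩
    have : s ∈ W₁ ∩ W₂ := ⟨hTW₁ hsT, hsW₂⟩
    rw [hdisj] at this; exact this
  have hW₂sub : W₂ ⊆ Bᶜ := by rw [hw₂]; exact connectedComponentIn_subset _ _
  have hW₂B : W₂ ∩ B = ∅ := by
    rw [Set.eq_empty_iff_forall_notMem]; rintro s ⟨h1, h2⟩; exact hW₂sub h1 h2
  have hw₂mem : w₂ ∈ W₂ := by rw [hw₂]; exact mem_connectedComponentIn hw₂B
  have hW₂b : IsBounded W₂ := by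
    by_contra h
    have hpre : IsPreconnected W₂ := by rw [hw₂]; exact isPreconnected_connectedComponentIn
    have := huniv W₂ hpre h hW₂B
    rw [Set.eq_empty_iff_forall_notMem] at this
    exact this w₂ ⟨hw₂mem, hw₂mem⟩
  exact ⟨W₂, ⟨w₂, hw₂B, hw₂⟩, hW₂b, huniv⟩

/-- the complement of a connected component of the complement of an atom is connected -/
lemma compl_component_connected (hP : PlanePseudoFoliation P) {A : Set (ℝ × ℝ)} (hA : A ∈ P)
    {w : ℝ × ℝ} (hw : w ∈ Aᶜ) : IsConnected (connectedComponentIn Aᶜ w)ᶜ := by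
  obtain ⟨U', V', hUV, hset⟩ := hP.two_components A hA
  set U := connectedComponentIn Aᶜ w with hU
  have hAopen : IsOpen Aᶜ := (hP.closed A hA).isOpen_compl
  have hUmem : U ∈ ({U', V'} : Set (Set (ℝ × ℝ))) := by rw [← hset]; exact ⟨w, hw, rfl⟩
  simp only [Set.mem_insert_iff, Set.mem_singleton_iff] at hUmem
  obtain ⟨V, hVmem, hVne⟩ : ∃ V, (V = U' ∨ V = V') ∧ V ≠ U := by
    rcases hUmem with h | h
    · exact ⟨V', Or.inr rfl, fun hc => hUV ((hc.trans h).symm)⟩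
    · exact ⟨U', Or.inl rfl, fun hc => hUV (hc.trans h)⟩
  have hVcomp : V ∈ {C : Set (ℝ × ℝ) | ∃ v ∈ Aᶜ, C = connectedComponentIn Aᶜ v} := by
    rw [hset]
    rcases hVmem with h | h
    · exact Or.inl h
    · exact Or.inr h
  obtain ⟨v, hv, hV⟩ := hVcomp
  have hvV : v ∈ V := by rw [hV]; exact mem_connectedComponentIn hv
  have hVU : V ∩ U = ∅ := by
    by_contra h
    obtain ⟨s, hs1, hs2⟩ := Set.nonempty_iff_ne_empty.mpr h
    rw [hV] at hs1
    rw [hU] at hs2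
    exact hVne (by rw [hV, connectedComponentIn_eq hs1, hU, connectedComponentIn_eq hs2])
  have hVopen : IsOpen V := by rw [hV]; exact hAopen.connectedComponentIn
  have hVconn : IsConnected V := by rw [hV]; exact isConnected_connectedComponentIn_iff.mpr hv
  have hclV : closure V ⊆ V ∪ A := by
    intro y hy
    by_cases hyA : y ∈ A
    · exact Or.inr hyA
    · left
      rw [hV] at hy ⊢
      exact closure_componentIn hAopen v ⟨hy, hyA⟩
  have hUc : Uᶜ = A ∪ V := by
    ext y
    simp only [Set.mem_compl_iff, Set.mem_union]
    constructor
    · intro hy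
      by_cases hyA : y ∈ A
      · exact Or.inl hyA
      · right
        have hycomp : connectedComponentIn Aᶜ y ∈ ({U', V'} : Set (Set (ℝ × ℝ))) := by
          rw [← hset]; exact ⟨y, hyA, rfl⟩
        simp only [Set.mem_insert_iff, Set.mem_singleton_iff] at hycomp
        have hyin : y ∈ connectedComponentIn Aᶜ y := mem_connectedComponentIn hyA
        have hCyU : connectedComponentIn Aᶜ y ≠ U := fun hc => hy (hc ▸ hyin)
        have : connectedComponentIn Aᶜ y = V := by
          rcases hUmem with h1 | h1 <;> rcases hVmem with h2 | h2 <;>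
            rcases hycomp with h3 | h3
          · exact absurd (h3.trans h1.symm) hCyU
          · exact absurd (h2.trans h1.symm) hVne
          · exact absurd (h3.trans h1.symm) hCyU
          · exact h3.trans h2.symm
          · exact h3.trans h2.symm
          · exact absurd (h3.trans h1.symm) hCyU
          · exact absurd (h2.trans h1.symm) hVne
          · exact absurd (h3.trans h1.symm) hCyU
        exact this ▸ hyin
    · rintro (hy | hy)
      · exact fun hc => (connectedComponentIn_subset Aᶜ w hc) hy
      · intro hc
        have : y ∈ V ∩ U := ⟨hy, hc⟩
        rw [hVU] at this
        exact this
  have hfront : (A ∩ closure V).Nonempty := by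
    by_contra h
    rw [Set.not_nonempty_iff_eq_empty] at h
    have hVclosed : closure V ⊆ V := fun y hy => by
      rcases hclV hy with h1 | h1
      · exact h1
      · exact absurd (show y ∈ A ∩ closure V from ⟨h1, hy⟩)
          (by rw [h]; exact Set.notMem_empty y)
    have hclopen : IsClopen V := ⟨closure_subset_iff_isClosed.mp hVclosed, hVopen⟩
    rcases isClopen_iff.mp hclopen with h1 | h1
    · exact (Set.eq_empty_iff_forall_notMem.mp h1 v) hvV
    · have : w ∈ V ∩ U := ⟨h1 ▸ Set.mem_univ w, mem_connectedComponentIn hw⟩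
      rw [hVU] at this
      exact this
  have hunion : A ∪ closure V = A ∪ V := by
    apply Set.Subset.antisymm
    · intro y hy
      rcases hy with h | h
      · exact Or.inl h
      · rcases hclV h with h1 | h1
        · exact Or.inr h1
        · exact Or.inl h1
    · exact Set.union_subset_union_right A subset_closure
  rw [hUc, ← hunion]
  exact IsConnected.union hfront (hP.connected A hA) hVconn.closure

end PFhelper

namespace PFhelper

variable {P : Set (Set (ℝ × ℝ))}

/-- invariant: `A` is an atom and `U` a bounded component of its complement -/
def Inv (P : Set (Set (ℝ × ℝ))) (A U : Set (ℝ × ℝ)) : Prop :=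
  A ∈ P ∧ IsBounded U ∧ ∃ w ∈ Aᶜ, U = connectedComponentIn Aᶜ w

open Classical in
lemma step (hP : PlanePseudoFoliation P) {A U : Set (ℝ × ℝ)} (h : Inv P A U) (q : ℝ × ℝ) :
    ∃ B U' : Set (ℝ × ℝ), Inv P B U' ∧ B ⊆ U ∧ closure U' ⊆ U ∧ (q ∈ U → q ∉ U') := by
  obtain ⟨hA, hUb, w, hw, hUdef⟩ := h
  have hAopen : IsOpen Aᶜ := (hP.closed A hA).isOpen_compl
  have hwU : w ∈ U := hUdef ▸ mem_connectedComponentIn hw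
  set x := if q ∈ U then q else w with hx
  have hxU : x ∈ U := by
    rw [hx]; split
    · assumption
    · exact hwU
  obtain ⟨B, hB, hxB⟩ := hP.covers x
  have hUsub : U ⊆ Aᶜ := hUdef ▸ connectedComponentIn_subset _ _
  have hBA : B ≠ A := fun hc => (hUsub hxU) (hc ▸ hxB)
  have hBAc : B ⊆ Aᶜ := by
    intro b hb hbA
    exact hBA (hP.disjoint B hB A hA ⟨b, hb, hbA⟩)
  have hBU : B ⊆ U := by
    have h1 : B ⊆ connectedComponentIn Aᶜ x :=
      (hP.connected B hB).isPreconnected.subset_connectedComponentIn hxB hBAc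
    rw [hUdef] at hxU ⊢
    rwa [← connectedComponentIn_eq hxU] at h1
  have hBb : IsBounded B := hUb.subset hBU
  obtain ⟨W, ⟨w', hw'B, hWdef⟩, hWb, huniv⟩ := pocket hP hB hBb
  have hWB : W ∩ B = ∅ := by
    rw [Set.eq_empty_iff_forall_notMem]
    rintro s ⟨h1, h2⟩
    exact (hWdef ▸ connectedComponentIn_subset Bᶜ w' : W ⊆ Bᶜ) h1 h2
  have hWU : W ⊆ U := by
    have hUcB : Uᶜ ∩ B = ∅ := by
      rw [Set.eq_empty_iff_forall_notMem]
      rintro s ⟨h1, h2⟩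
      exact h1 (hBU h2)
    have hUcconn : IsConnected Uᶜ := by
      rw [hUdef]; exact compl_component_connected hP hA hw
    have hUcunb : ¬ IsBounded Uᶜ := unbounded_compl hUb
    have := huniv Uᶜ hUcconn.isPreconnected hUcunb hUcB
    intro s hs
    by_contra hsU
    rw [Set.eq_empty_iff_forall_notMem] at this
    exact this s ⟨hsU, hs⟩
  refine ⟨B, W, ⟨hB, hWb, w', hw'B, hWdef⟩, hBU, ?_, ?_⟩
  · intro y hy
    by_cases hyB : y ∈ B
    · exact hBU hyB
    · apply hWU
      rw [hWdef] at hy ⊢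
      exact closure_componentIn (hP.closed B hB).isOpen_compl w' ⟨hy, hyB⟩
  · intro hqU hqW
    have hxq : x = q := by rw [hx, if_pos hqU]
    have : q ∈ W ∩ B := ⟨hqW, hxq ▸ hxB⟩
    rw [hWB] at this
    exact this

end PFhelper

open PFhelper Metric Set in
/-- For a plane pseudo-foliation, both connected components of the complement of any atom
are unbounded. -/
theorem pseudoFoliation_complement_components_unbounded
    (P : Set (Set (ℝ × ℝ))) (hP : PlanePseudoFoliation P) :
    ∀ z : ℝ × ℝ, ∀ A ∈ P, z ∈ A →
      ∀ w ∉ A, ¬ IsBounded (connectedComponentIn Aᶜ w) := by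
  intro z A hA hz w hw hbdd
  obtain ⟨e, he⟩ := TopologicalSpace.exists_dense_seq (ℝ × ℝ)
  have inv0 : Inv P A (connectedComponentIn Aᶜ w) := ⟨hA, hbdd, w, hw, rfl⟩
  -- the recursive sequence of pairs (atom, bounded pocket)
  have hstep : ∀ p : {p : Set (ℝ × ℝ) × Set (ℝ × ℝ) // Inv P p.1 p.2}, ∀ q : ℝ × ℝ,
      ∃ p' : Set (ℝ × ℝ) × Set (ℝ × ℝ), Inv P p'.1 p'.2 ∧ p'.1 ⊆ p.1.2 ∧
        closure p'.2 ⊆ p.1.2 ∧ (q ∈ p.1.2 → q ∉ p'.2) := by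
    rintro ⟨⟨B, U⟩, hInv⟩ q
    obtain ⟨B', U', h1, h2, h3, h4⟩ := step hP hInv q
    exact ⟨(B', U'), h1, h2, h3, h4⟩
  let g : ℕ → {p : Set (ℝ × ℝ) × Set (ℝ × ℝ) // Inv P p.1 p.2} := fun n =>
    Nat.rec ⟨(A, connectedComponentIn Aᶜ w), inv0⟩
      (fun n prev => ⟨(hstep prev (e n)).choose, (hstep prev (e n)).choose_spec.1⟩) n
  set Useq : ℕ → Set (ℝ × ℝ) := fun n => (g n).1.2 with hUseq
  have hspec : ∀ n, (g (n+1)).1.1 ⊆ Useq n ∧ closure (Useq (n+1)) ⊆ Useq n ∧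
      (e n ∈ Useq n → e n ∉ Useq (n+1)) := by
    intro n
    have h := (hstep (g n) (e n)).choose_spec
    exact ⟨h.2.1, h.2.2.1, h.2.2.2⟩
  have hInvn : ∀ n, Inv P (g n).1.1 (Useq n) := fun n => (g n).2
  have hUne : ∀ n, (Useq n).Nonempty := by
    intro n
    obtain ⟨_, _, wn, hwn, hdef⟩ := hInvn n
    exact ⟨wn, hdef ▸ mem_connectedComponentIn hwn⟩
  have hUb : ∀ n, IsBounded (Useq n) := fun n => (hInvn n).2.1
  -- nested compact closures
  have hnested : ∀ n, closure (Useq (n+1)) ⊆ closure (Useq n) :=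
    fun n => ((hspec n).2.1).trans subset_closure
  obtain ⟨p, hp⟩ : (⋂ n, closure (Useq n)).Nonempty := by
    apply IsCompact.nonempty_iInter_of_sequence_nonempty_isCompact_isClosed
      (fun n => closure (Useq n)) hnested
      (fun n => (hUne n).closure)
      ((hUb 0).isCompact_closure)
      (fun n => isClosed_closure)
  simp only [Set.mem_iInter] at hp
  have hpU : ∀ n, p ∈ Useq n := fun n => (hspec n).2.1 (hp (n+1))
  -- the atom through p and its pocket
  obtain ⟨C, hC, hpC⟩ := hP.covers p
  have hCU : ∀ n, C ⊆ Useq n := by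
    intro n
    obtain ⟨hAn, _, wn, hwn, hdef⟩ := hInvn n
    have hpn : p ∈ Useq n := hpU n
    have hpAc : p ∈ ((g n).1.1)ᶜ := (hdef ▸ connectedComponentIn_subset _ _ : Useq n ⊆ _) hpn
    have hCA : C ≠ (g n).1.1 := fun hc => hpAc (hc ▸ hpC)
    have hCAc : C ⊆ ((g n).1.1)ᶜ := by
      intro c hc hcA
      exact hCA (hP.disjoint C hC _ hAn ⟨c, hc, hcA⟩)
    have h1 : C ⊆ connectedComponentIn ((g n).1.1)ᶜ p :=
      (hP.connected C hC).isPreconnected.subset_connectedComponentIn hpC hCAc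
    rw [hdef] at hpn ⊢
    rwa [← connectedComponentIn_eq hpn] at h1
  have hCb : IsBounded C := (hUb 0).subset (hCU 0)
  obtain ⟨W, ⟨w', hw'C, hWdef⟩, hWb, huniv⟩ := pocket hP hC hCb
  have hWopen : IsOpen W := hWdef ▸ (hP.closed C hC).isOpen_compl.connectedComponentIn
  have hWne : W.Nonempty := ⟨w', hWdef ▸ mem_connectedComponentIn hw'C⟩
  have hWU : ∀ n, W ⊆ Useq n := by
    intro n
    obtain ⟨hAn, hUbn, wn, hwn, hdef⟩ := hInvn n
    have hUcC : (Useq n)ᶜ ∩ C = ∅ := by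
      rw [Set.eq_empty_iff_forall_notMem]
      rintro s ⟨h1, h2⟩
      exact h1 (hCU n h2)
    have hUcconn : IsConnected (Useq n)ᶜ := by
      rw [hdef]; exact compl_component_connected hP hAn hwn
    have h := huniv _ hUcconn.isPreconnected (unbounded_compl (hUb n)) hUcC
    intro s hs
    by_contra hsU
    rw [Set.eq_empty_iff_forall_notMem] at h
    exact h s ⟨hsU, hs⟩
  -- dense sequence hits W, contradiction
  obtain ⟨k, hk⟩ := he.exists_mem_open hWopen hWne
  exact ((hspec k).2.2 (hWU k hk)) (hWU (k+1) hk)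
end
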